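/- arXiv:1903.02810 — 7 statements merged into one kernel-verified Lean document; each statement's English description precedes it below -/
import Mathlib

section
/- Let a, c ∈ ℝ^n with a_i > 0 and c_i > 0 for all i, and let 0 ≤ b ≤ Σ_{i=1}^n a_i. A feasible point x (i.e., a^T x ≤ b and 0 ≤ x ≤ 1) is an optimal solution of the follower's continuous knapsack problem (maximize c^T x subject to a^T x ≤ b, 0 ≤ x ≤ 1) if and only if a^T x = b and for all indices i, j: c_i/a_i > c_j/a_j and x_j > 0 imply x_i = 1. -/
/-!
If `a ⬝ᵥ x < b`, some item is not full and can be increased; if `cᵢ/aᵢ > cⱼ/aⱼ` with `xⱼ > 0`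
and `xᵢ < 1`, shifting capacity from `j` to `i` raises the profit. Conversely, for a saturating
greedy-consistent `x` there is a threshold `r ≥ 0` below every ratio of an item used by `x` and
above every ratio of an item not full in `x`, and then
`c ⬝ᵥ x - c ⬝ᵥ y = (c - r • a) ⬝ᵥ (x - y) + r * (b - a ⬝ᵥ y)` is a sum of nonnegative terms.
-/

open Set

variable {ι : Type*}

def knapsackFeasibleSet [Fintype ι] (a : ι → ℝ) (b : ℝ) : Set (ι → ℝ) :=
  {y | a ⬝ᵥ y ≤ b ∧ ∀ i, y i ∈ Icc 0 1}

lemma add_single_mem_Icc {x : ι → ℝ} [DecidableEq ι] (hx : ∀ i, x i ∈ Icc (0 : ℝ) 1) {k : ι}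
    {s : ℝ} (hk : x k + s ∈ Icc 0 1) (i : ι) :
    (x + Pi.single k s : ι → ℝ) i ∈ Icc 0 1 := by
  rcases eq_or_ne i k with rfl | hi
  · simpa using hk
  · simpa [hi] using hx i

variable [Fintype ι]

section Necessity

variable {a c x : ι → ℝ} {b : ℝ}

lemma dotProduct_eq_of_isMaxOn (ha : ∀ i, 0 < a i) (hc : ∀ i, 0 < c i) (hb : b ≤ ∑ i, a i)
    (hx : x ∈ knapsackFeasibleSet a b) (hmax : IsMaxOn (c ⬝ᵥ ·) (knapsackFeasibleSet a b) x) :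
    a ⬝ᵥ x = b := by
  classical
  obtain ⟨hxb, hx01⟩ := hx
  by_contra hne
  have hlt : a ⬝ᵥ x < b := hxb.lt_of_ne hne
  obtain ⟨k, hk⟩ : ∃ k, x k < 1 := by
    by_contra! hone
    have : x = 1 := funext fun i => le_antisymm (hx01 i).2 (hone i)
    rw [this, dotProduct_one] at hlt
    linarith
  set ε := min (1 - x k) ((b - a ⬝ᵥ x) / a k)
  have hε : 0 < ε := lt_min (by linarith) (div_pos (by linarith) (ha k))
  have hεx : ε ≤ 1 - x k := min_le_left _ _
  have hεa : a k * ε ≤ b - a ⬝ᵥ x := (le_div_iff₀' (ha k)).mp (min_le_right _ _)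
  have hy : x + Pi.single k ε ∈ knapsackFeasibleSet a b := by
    refine ⟨?_, add_single_mem_Icc hx01 (k := k) (s := ε) ⟨by linarith [(hx01 k).1], by linarith⟩⟩
    rw [dotProduct_add, dotProduct_single]
    linarith
  have := isMaxOn_iff.mp hmax _ hy
  rw [dotProduct_add, dotProduct_single] at this
  nlinarith [mul_pos (hc k) hε]

lemma eq_one_of_isMaxOn (ha : ∀ i, 0 < a i) (hx : x ∈ knapsackFeasibleSet a b)
    (hmax : IsMaxOn (c ⬝ᵥ ·) (knapsackFeasibleSet a b) x) {i j : ι}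
    (hij : c j / a j < c i / a i) (hxj : 0 < x j) : x i = 1 := by
  classical
  obtain ⟨hxb, hx01⟩ := hx
  by_contra hne
  have hxi : x i < 1 := (hx01 i).2.lt_of_ne hne
  have hji : j ≠ i := by rintro rfl; exact hij.false
  -- move `δ` units of capacity from item `j` to the more profitable item `i`
  set δ := min (a j * x j) (a i * (1 - x i))
  have hδ : 0 < δ := lt_min (mul_pos (ha j) hxj) (mul_pos (ha i) (by linarith))
  have hδi : δ / a i ≤ 1 - x i := (div_le_iff₀' (ha i)).mpr (min_le_right _ _)
  have hδj : δ / a j ≤ x j := (div_le_iff₀' (ha j)).mpr (min_le_left _ _)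
  have hδi0 : 0 ≤ δ / a i := (div_pos hδ (ha i)).le
  set y := x + Pi.single i (δ / a i) + Pi.single j (-(δ / a j))
  have hdot : ∀ v : ι → ℝ, v ⬝ᵥ y = v ⬝ᵥ x + δ * (v i / a i - v j / a j) := by
    intro v
    simp only [y, dotProduct_add, dotProduct_single]
    ring
  have hy : y ∈ knapsackFeasibleSet a b := by
    refine ⟨?_, add_single_mem_Icc
      (add_single_mem_Icc hx01 (k := i) (s := δ / a i) ⟨by linarith [(hx01 i).1], by linarith⟩) ?_⟩
    · rw [hdot, div_self (ha i).ne', div_self (ha j).ne']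
      linarith
    · simp only [Pi.add_apply, Pi.single_eq_of_ne hji, add_zero]
      constructor <;> linarith [(hx01 j).2, div_pos hδ (ha j)]
  have := isMaxOn_iff.mp hmax _ hy
  rw [hdot] at this
  nlinarith

end Necessity

section Sufficiency

variable {a c x y : ι → ℝ}

lemma dotProduct_le_of_threshold {r : ℝ} (hr : 0 ≤ r) (hpos : ∀ k, 0 < x k → r * a k ≤ c k)
    (hlt : ∀ k, x k < 1 → c k ≤ r * a k) (hy : ∀ k, y k ∈ Icc 0 1)
    (hay : a ⬝ᵥ y ≤ a ⬝ᵥ x) : c ⬝ᵥ y ≤ c ⬝ᵥ x := by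
  have hterm : ∀ k, 0 ≤ (c k - r * a k) * (x k - y k) := by
    intro k
    rcases lt_trichotomy (x k) (y k) with h | h | h
    · exact mul_nonneg_of_nonpos_of_nonpos (by linarith [hlt k (h.trans_le (hy k).2)])
        (by linarith)
    · simp [h]
    · exact mul_nonneg (by linarith [hpos k ((hy k).1.trans_lt h)]) (by linarith)
  have hsplit : c ⬝ᵥ x - c ⬝ᵥ y = (c - r • a) ⬝ᵥ (x - y) + r * (a ⬝ᵥ x - a ⬝ᵥ y) := by
    simp only [sub_dotProduct, dotProduct_sub, smul_dotProduct, smul_eq_mul]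
    ring
  have : 0 ≤ (c - r • a) ⬝ᵥ (x - y) := Finset.sum_nonneg fun k _ => by simpa using hterm k
  nlinarith

lemma exists_threshold_of_greedy (ha : ∀ i, 0 < a i) (hc : ∀ i, 0 ≤ c i)
    (hgreedy : ∀ i j, c j / a j < c i / a i → 0 < x j → x i = 1) :
    ∃ r, 0 ≤ r ∧ (∀ k, 0 < x k → r * a k ≤ c k) ∧ (∀ k, x k < 1 → c k ≤ r * a k) := by
  set R := insert 0 ((fun k => c k / a k) '' {k | x k < 1})
  have hR : BddAbove R := (Set.toFinite _).insert 0 |>.bddAbove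
  refine ⟨sSup R, le_csSup hR (mem_insert _ _), fun k hk => ?_, fun k hk => ?_⟩
  · rw [← le_div_iff₀ (ha k)]
    refine csSup_le (insert_nonempty _ _) (forall_mem_insert.mpr ⟨div_nonneg (hc k) (ha k).le, ?_⟩)
    rintro _ ⟨i, hi, rfl⟩
    by_contra! h
    exact (hgreedy i k h hk).not_lt hi
  · rw [← div_le_iff₀ (ha k)]
    exact le_csSup hR (mem_insert_of_mem _ ⟨k, hk, rfl⟩)

end Sufficiency

theorem isMaxOn_knapsack_iff {a c x : ι → ℝ} {b : ℝ} (ha : ∀ i, 0 < a i) (hc : ∀ i, 0 < c i)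
    (hb : b ≤ ∑ i, a i) (hx : x ∈ knapsackFeasibleSet a b) :
    IsMaxOn (c ⬝ᵥ ·) (knapsackFeasibleSet a b) x ↔
      a ⬝ᵥ x = b ∧ ∀ i j, c j / a j < c i / a i → 0 < x j → x i = 1 := by
  refine ⟨fun hmax => ⟨dotProduct_eq_of_isMaxOn ha hc hb hx hmax,
    fun i j hij hxj => eq_one_of_isMaxOn ha hx hmax hij hxj⟩, fun ⟨hsat, hgreedy⟩ => ?_⟩
  obtain ⟨r, hr, hpos, hlt⟩ := exists_threshold_of_greedy ha (fun i => (hc i).le) hgreedy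
  exact isMaxOn_iff.mpr fun y ⟨hyb, hy⟩ =>
    dotProduct_le_of_threshold hr hpos hlt hy (hsat ▸ hyb)

theorem follower_optimal_iff_general
    (n : ℕ) (a c : Fin n → ℝ) (ha : ∀ i, 0 < a i) (hc : ∀ i, 0 < c i)
    (b : ℝ) (hb1 : b ≤ ∑ i, a i)
    (x : Fin n → ℝ)
    (hfeas : (∑ i, a i * x i) ≤ b ∧ ∀ i, 0 ≤ x i ∧ x i ≤ 1) :
    (∀ y : Fin n → ℝ,
        ((∑ i, a i * y i) ≤ b ∧ ∀ i, 0 ≤ y i ∧ y i ≤ 1) →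
        ∑ i, c i * y i ≤ ∑ i, c i * x i) ↔
    ((∑ i, a i * x i) = b ∧
      ∀ i j : Fin n, c j / a j < c i / a i → 0 < x j → x i = 1) :=
  -- `⬝ᵥ` and membership in `Icc` unfold definitionally to the sums and inequalities above
  isMaxOn_iff.symm.trans (isMaxOn_knapsack_iff ha hc hb1 hfeas)

/-- Characterization of optimal solutions of the follower's continuous knapsack
problem: a feasible `x` is optimal iff it fills the capacity completely and is
greedy-consistent: whenever `cᵢ/aᵢ > cⱼ/aⱼ` and `xⱼ > 0`, then `xᵢ = 1`. -/
theorem follower_optimal_iff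
    (n : ℕ) (a c : Fin n → ℝ) (ha : ∀ i, 0 < a i) (hc : ∀ i, 0 < c i)
    (b : ℝ) (hb0 : 0 ≤ b) (hb1 : b ≤ ∑ i, a i)
    (x : Fin n → ℝ)
    (hfeas : (∑ i, a i * x i) ≤ b ∧ ∀ i, 0 ≤ x i ∧ x i ≤ 1) :
    (∀ y : Fin n → ℝ,
        ((∑ i, a i * y i) ≤ b ∧ ∀ i, 0 ≤ y i ∧ y i ≤ 1) →
        ∑ i, c i * y i ≤ ∑ i, c i * x i) ↔
    ((∑ i, a i * x i) = b ∧
      ∀ i j : Fin n, c j / a j < c i / a i → 0 < x j → x i = 1) :=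
  follower_optimal_iff_general n a c ha hc b hb1 x hfeas
end

section
/- Let a ∈ ℝ^n with a_i > 0, and let c⁻, c⁺ ∈ ℝ^n with 0 < c_i⁻ ≤ c_i⁺ for all i. For a linear order ⪯ on {1,…,n}, the following are equivalent: (1) there exists c ∈ ℝ^n with c_i⁻ ≤ c_i ≤ c_i⁺ for all i such that i ⪯ j implies c_i/a_i ≥ c_j/a_j; (2) ⪯ is a linear extension of the interval order P, i.e., c_i⁻/a_i > c_j⁺/a_j implies i ≺ j (i ⪯ j and i ≠ j). -/
/-!
Dividing by the sizes reduces the theorem to a statement about ratios: given intervals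
`[l i, u i]` and a linear order `r`, one can pick a point in each interval, antitone along `r`,
iff `u j < l i` forces `i` strictly before `j`. Necessity is immediate from totality. For
sufficiency take, for each `i`, the minimum of `u k` over all `k` weakly before `i`;
this is antitone by transitivity, at most `u i` by reflexivity, and at least `l i` because a
`k ⪯ i` with `u k < l i` would have to come strictly after `i`.
-/

open Finset

section IntervalSelection

variable {ι α : Type*} [LinearOrder α] (r : ι → ι → Prop) (l u : ι → α)

theorem lt_imp_strictly_before_of_antitone_selection [Std.Total r] {f : ι → α}
    (hf : ∀ i, l i ≤ f i ∧ f i ≤ u i) (hanti : ∀ i j, r i j → f j ≤ f i)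
    {i j : ι} (hlu : u j < l i) : r i j ∧ i ≠ j := by
  have hlt : f j < f i := ((hf j).2.trans_lt hlu).trans_le (hf i).1
  refine ⟨(total_of r i j).resolve_right fun hji => (hanti j i hji).not_gt hlt, ?_⟩
  rintro rfl
  exact lt_irrefl _ hlt

variable [Fintype ι] [DecidableRel r] [Std.Refl r]

def minUpperBefore (i : ι) : α :=
  ({k | r k i} : Finset ι).inf' ⟨i, by simp [refl_of r]⟩ u

theorem minUpperBefore_le (i : ι) : minUpperBefore r u i ≤ u i :=
  inf'_le _ (by simp [refl_of r])

theorem minUpperBefore_antitone [IsTrans ι r] {i j : ι} (hij : r i j) :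
    minUpperBefore r u j ≤ minUpperBefore r u i :=
  le_inf' _ _ fun k hk => inf'_le _ (by simpa using trans_of r (by simpa using hk) hij)

theorem le_minUpperBefore [Std.Antisymm r] (hlu : ∀ i j, u j < l i → r i j ∧ i ≠ j) (i : ι) :
    l i ≤ minUpperBefore r u i := by
  refine le_inf' _ _ fun k hk => not_lt.mp fun hlt => ?_
  obtain ⟨hik, hne⟩ := hlu i k hlt
  exact hne (antisymm_of r hik (by simpa using hk))

end IntervalSelection

theorem exists_antitone_selection_iff {ι α : Type*} [Fintype ι] [LinearOrder α]
    (r : ι → ι → Prop) [IsLinearOrder ι r] (l u : ι → α) :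
    (∃ f : ι → α, (∀ i, l i ≤ f i ∧ f i ≤ u i) ∧ ∀ i j, r i j → f j ≤ f i) ↔
      ∀ i j, u j < l i → r i j ∧ i ≠ j := by
  classical
  refine ⟨fun ⟨f, hf, hanti⟩ i j => lt_imp_strictly_before_of_antitone_selection r l u hf hanti,
    fun hlu => ⟨minUpperBefore r u, fun i => ⟨le_minUpperBefore r l u hlu i,
      minUpperBefore_le r u i⟩, fun i j => minUpperBefore_antitone r u⟩⟩

theorem sortings_are_linear_extensions_of_interval_order_general
    (n : ℕ) (a cm cp : Fin n → ℝ) (ha : ∀ i, 0 < a i)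
    (r : Fin n → Fin n → Prop) (hr : IsLinearOrder (Fin n) r) :
    (∃ c : Fin n → ℝ, (∀ i, cm i ≤ c i ∧ c i ≤ cp i) ∧
        ∀ i j : Fin n, r i j → c j / a j ≤ c i / a i) ↔
    (∀ i j : Fin n, cp j / a j < cm i / a i → r i j ∧ i ≠ j) := by
  rw [← exists_antitone_selection_iff r]
  constructor
  · rintro ⟨c, hc, hanti⟩
    exact ⟨fun i => c i / a i, fun i => ⟨div_le_div_of_nonneg_right (hc i).1 (ha i).le,
      div_le_div_of_nonneg_right (hc i).2 (ha i).le⟩, hanti⟩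
  · rintro ⟨f, hf, hanti⟩
    refine ⟨fun i => f i * a i, fun i => ⟨(div_le_iff₀ (ha i)).mp (hf i).1,
      (le_div_iff₀ (ha i)).mp (hf i).2⟩, fun i j hij => ?_⟩
    simpa only [mul_div_cancel_right₀ _ (ha _).ne'] using hanti i j hij

/-- The possible sortings of the items by decreasing profit-to-size ratio, over
all profit vectors `c` in the box `[c⁻, c⁺]`, are exactly the linear extensions
of the interval order `P` defined by `i <_P j ↔ cᵢ⁻/aᵢ > cⱼ⁺/aⱼ`. -/
theorem sortings_are_linear_extensions_of_interval_order
    (n : ℕ) (a cm cp : Fin n → ℝ) (ha : ∀ i, 0 < a i)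
    (hcm : ∀ i, 0 < cm i) (hcmcp : ∀ i, cm i ≤ cp i)
    (r : Fin n → Fin n → Prop) (hr : IsLinearOrder (Fin n) r) :
    (∃ c : Fin n → ℝ, (∀ i, cm i ≤ c i ∧ c i ≤ cp i) ∧
        ∀ i j : Fin n, r i j → c j / a j ≤ c i / a i) ↔
    (∀ i j : Fin n, cp j / a j < cm i / a i → r i j ∧ i ≠ j) :=
  sortings_are_linear_extensions_of_interval_order_general n a cm cp ha r hr
end

section
/- Let a, d ∈ ℝ^n with a_i > 0 for all i, let 0 < c⁻ ≤ c⁺ componentwise with c⁻, c⁺ ∈ ℝ^n, let U := [c_1⁻,c_1⁺] × … × [c_n⁻,c_n⁺], and let 0 ≤ b ≤ Σ_{i=1}^n a_i. Let P be the interval order defined by i <_P j iff c_i⁻/a_i > c_j⁺/a_j. Then min over c ∈ U of min{ d^T x : x an optimal solution of (max c^T x s.t. a^T x ≤ b, 0 ≤ x ≤ 1) } equals min{ d^T x^F : F a fractional prefix of P or F = ∅, with a^T x^F = b }. -/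
/-- Feasibility for the follower's continuous knapsack problem. -/
def feasibleKP {n : ℕ} (a : Fin n → ℝ) (b : ℝ) (x : Fin n → ℝ) : Prop :=
  (∑ i, a i * x i) ≤ b ∧ ∀ i, 0 ≤ x i ∧ x i ≤ 1

/-- Optimality for the follower's continuous knapsack problem with profits `c`. -/
def optimalKP {n : ℕ} (a c : Fin n → ℝ) (b : ℝ) (x : Fin n → ℝ) : Prop :=
  feasibleKP a b x ∧ ∀ y, feasibleKP a b y → ∑ i, c i * y i ≤ ∑ i, c i * x i

/-- The vector associated with a fractional prefix `(J, j, λ)`. -/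
def fracVec {n : ℕ} (J : Finset (Fin n)) (j : Fin n) (lam : ℝ) : Fin n → ℝ :=
  fun i => if i = j then lam else if i ∈ J then 1 else 0

/-!
An optimal solution of the continuous knapsack problem is greedy in the ratios `cᵢ / aᵢ`: an item
that is not taken fully never has a larger ratio than an item that is taken (exchange argument).
Hence two fractional items of an optimal solution have the same ratio, and weight can be shifted
between them without losing optimality, in the direction that does not increase `dᵀx`, until at
most one item is fractional. The support of such a solution is a fractional prefix of `P`.
Conversely, a fractional prefix filling the knapsack is optimal for suitable profits in `U`, and
there are only finitely many of them since `λ` is determined by `(J, j)`; so the minimum over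
prefixes exists and is also the adversary's minimum.
-/

open Finset

variable {n : ℕ}

lemma exists_isLeast_of_forall_exists_le {α : Type*} [LinearOrder α] {S T : Set α}
    (hT : T.Finite) (hS : S.Nonempty) (hTS : T ⊆ S) (hle : ∀ w ∈ S, ∃ u ∈ T, u ≤ w) :
    ∃ v, IsLeast S v ∧ IsLeast T v := by
  obtain ⟨w, hw⟩ := hS
  obtain ⟨u, hu, -⟩ := hle w hw
  obtain ⟨v, hv, hmin⟩ := Set.exists_min_image T id hT ⟨u, hu⟩
  refine ⟨v, ⟨hTS hv, fun w hw => ?_⟩, ⟨hv, hmin⟩⟩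
  obtain ⟨u, hu, huw⟩ := hle w hw
  exact (hmin u hu).trans huw

section Vectors

lemma sum_mul_fracVec (J : Finset (Fin n)) (j : Fin n) (lam : ℝ) (w : Fin n → ℝ) :
    ∑ i, w i * fracVec J j lam i = w j * lam + ∑ i ∈ J.erase j, w i := by
  rw [← add_sum_erase _ _ (mem_univ j), sum_congr rfl (g := fun i => if i ∈ J then w i else 0)]
  · simp only [fracVec, if_pos, ← sum_filter]
    congr 2
    ext i
    simp [and_comm]
  · intro i hi
    simp [fracVec, (mem_erase.mp hi).1]

lemma fracVec_eq_self {y : Fin n → ℝ} {j : Fin n}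
    (h01 : ∀ i ≠ j, y i = 0 ∨ y i = 1) :
    fracVec ({i | 0 < y i} : Finset (Fin n)) j (y j) = y := by
  funext i
  by_cases hij : i = j
  · simp [fracVec, hij]
  · rcases h01 i hij with h | h <;> simp [fracVec, hij, h]

lemma sum_mul_add_single (w x : Fin n → ℝ) (i : Fin n) (p : ℝ) :
    ∑ j, w j * (x + Pi.single i p : Fin n → ℝ) j = ∑ j, w j * x j + w i * p := by
  simp [mul_add, sum_add_distrib, Pi.single_apply]

/-- Moving weight `s` (measured in `a`) from item `k` to item `i`. -/
noncomputable def shiftWeight (a x : Fin n → ℝ) (i k : Fin n) (s : ℝ) : Fin n → ℝ :=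
  x + Pi.single i (s / a i) - Pi.single k (s / a k)

lemma sum_mul_shiftWeight (a w x : Fin n → ℝ) (i k : Fin n) (s : ℝ) :
    ∑ j, w j * shiftWeight a x i k s j = ∑ j, w j * x j + s * (w i / a i - w k / a k) := by
  simp only [shiftWeight, Pi.add_apply, Pi.sub_apply, Pi.single_apply, mul_add, mul_sub,
    sum_add_distrib, sum_sub_distrib, mul_ite, mul_zero, sum_ite_eq', mem_univ, if_true]
  ring

lemma shiftWeight_apply_left {a x : Fin n → ℝ} {i k : Fin n} (hik : i ≠ k) (s : ℝ) :
    shiftWeight a x i k s i = x i + s / a i := by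
  simp [shiftWeight, hik]

lemma shiftWeight_apply_right {a x : Fin n → ℝ} {i k : Fin n} (hik : i ≠ k) (s : ℝ) :
    shiftWeight a x i k s k = x k - s / a k := by
  simp [shiftWeight, hik.symm]

lemma shiftWeight_apply_of_ne {a x : Fin n → ℝ} {i k j : Fin n} (hji : j ≠ i) (hjk : j ≠ k)
    (s : ℝ) : shiftWeight a x i k s j = x j := by
  simp [shiftWeight, hji, hjk]

end Vectors

section Knapsack

variable {a c : Fin n → ℝ} {b : ℝ} {x : Fin n → ℝ}

noncomputable def fracCoords (x : Fin n → ℝ) : Finset (Fin n) := {i | 0 < x i ∧ x i < 1}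

lemma eq_zero_or_eq_one_of_notMem_fracCoords (hx : feasibleKP a b x) {i : Fin n}
    (hi : i ∉ fracCoords x) : x i = 0 ∨ x i = 1 := by
  simp only [fracCoords, mem_filter, mem_univ, true_and, not_and_or, not_lt] at hi
  rcases hi with h | h
  · exact .inl (le_antisymm h (hx.2 i).1)
  · exact .inr (le_antisymm (hx.2 i).2 h)

lemma exists_optimalKP (a c : Fin n → ℝ) (hb : 0 ≤ b) : ∃ x, optimalKP a c b x := by
  have hcompact : IsCompact {x : Fin n → ℝ | feasibleKP a b x} := by
    have : {x : Fin n → ℝ | feasibleKP a b x} = {x | ∑ i, a i * x i ≤ b} ∩ Set.Icc 0 1 := by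
      ext x
      simp [feasibleKP, Pi.le_def, forall_and]
    rw [this]
    exact isCompact_Icc.inter_left (isClosed_le (by fun_prop) continuous_const)
  obtain ⟨x, hx, hmax⟩ := hcompact.exists_isMaxOn ⟨0, by simp [feasibleKP, hb]⟩
    (f := fun x => ∑ i, c i * x i) (by fun_prop)
  exact ⟨x, hx, fun y hy => hmax hy⟩

lemma eq_zero_of_feasibleKP_zero (ha : ∀ i, 0 < a i) (hx : feasibleKP a 0 x) : x = 0 := by
  have hnonneg : ∀ i ∈ univ, 0 ≤ a i * x i := fun i _ => mul_nonneg (ha i).le (hx.2 i).1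
  have hsum : ∑ i, a i * x i = 0 := le_antisymm hx.1 (sum_nonneg hnonneg)
  funext i
  simpa [(ha i).ne'] using (sum_eq_zero_iff_of_nonneg hnonneg).mp hsum i (mem_univ i)

lemma optimalKP_zero (ha : ∀ i, 0 < a i) (c : Fin n → ℝ) : optimalKP a c 0 0 :=
  ⟨by simp [feasibleKP], fun y hy => by simp [eq_zero_of_feasibleKP_zero ha hy]⟩

lemma optimalKP_of_threshold {t : ℝ} (ht : 0 ≤ t) (hx : ∀ i, 0 ≤ x i ∧ x i ≤ 1)
    (hsum : ∑ i, a i * x i = b)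
    (hkkt : ∀ i, (x i < 1 → c i ≤ t * a i) ∧ (0 < x i → t * a i ≤ c i)) :
    optimalKP a c b x := by
  refine ⟨⟨hsum.le, hx⟩, fun y hy => ?_⟩
  have hsplit : ∑ i, c i * y i - ∑ i, c i * x i =
      ∑ i, (c i - t * a i) * (y i - x i) + t * (∑ i, a i * y i - ∑ i, a i * x i) := by
    simp only [mul_sum, ← sum_sub_distrib, ← sum_add_distrib]
    exact sum_congr rfl fun i _ => by ring
  have hterm : ∀ i ∈ univ, (c i - t * a i) * (y i - x i) ≤ 0 := by
    intro i _
    obtain ⟨hlow, hup⟩ := hkkt i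
    rcases (hx i).1.eq_or_lt with h0 | h0
    · nlinarith [hlow (by linarith), (hy.2 i).1]
    rcases (hx i).2.lt_or_eq with h1 | h1
    · simp [le_antisymm (hlow h1) (hup h0)]
    · nlinarith [hup h0, (hy.2 i).2]
  have hcap : t * (∑ i, a i * y i - ∑ i, a i * x i) ≤ 0 :=
    mul_nonpos_of_nonneg_of_nonpos ht (by linarith [hy.1])
  linarith [sum_nonpos hterm]

lemma sum_eq_of_optimalKP (ha : ∀ i, 0 < a i) (hc : ∀ i, 0 < c i) (hb : b ≤ ∑ i, a i)
    (hx : optimalKP a c b x) : ∑ i, a i * x i = b := by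
  by_contra hne
  have hlt : ∑ i, a i * x i < b := lt_of_le_of_ne hx.1.1 hne
  obtain ⟨i, hi⟩ : ∃ i, x i < 1 := by
    by_contra! hall
    have : ∑ i, a i * x i = ∑ i, a i :=
      sum_congr rfl fun i _ => by rw [le_antisymm (hx.1.2 i).2 (hall i), mul_one]
    linarith
  set δ := min (1 - x i) ((b - ∑ j, a j * x j) / a i)
  have hδ : 0 < δ := lt_min (by linarith) (div_pos (by linarith) (ha i))
  have hδa : a i * δ ≤ b - ∑ j, a j * x j := by
    rw [mul_comm, ← le_div_iff₀ (ha i)]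
    exact min_le_right _ _
  have hfeas : feasibleKP a b (x + Pi.single i δ) := by
    refine ⟨by rw [sum_mul_add_single]; linarith, fun j => ?_⟩
    by_cases hji : j = i
    · subst hji
      simp only [Pi.add_apply, Pi.single_eq_same]
      have hδ1 : δ ≤ 1 - x j := min_le_left _ _
      constructor <;> linarith [(hx.1.2 j).1]
    · simpa [Pi.single_apply, hji] using hx.1.2 j
  have := hx.2 _ hfeas
  rw [sum_mul_add_single] at this
  nlinarith [mul_pos (hc i) hδ]

noncomputable def maxShift (a x : Fin n → ℝ) (i k : Fin n) : ℝ :=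
  min ((1 - x i) * a i) (x k * a k)

lemma maxShift_nonneg (ha : ∀ i, 0 < a i) (hx : feasibleKP a b x) (i k : Fin n) :
    0 ≤ maxShift a x i k :=
  le_min (mul_nonneg (by linarith [(hx.2 i).2]) (ha i).le) (mul_nonneg (hx.2 k).1 (ha k).le)

lemma maxShift_pos (ha : ∀ i, 0 < a i) {i k : Fin n} (hi : x i < 1) (hk : 0 < x k) :
    0 < maxShift a x i k :=
  lt_min (mul_pos (by linarith) (ha i)) (mul_pos hk (ha k))

lemma feasibleKP_shiftWeight (ha : ∀ i, 0 < a i) (hx : feasibleKP a b x) {i k : Fin n}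
    (hik : i ≠ k) : feasibleKP a b (shiftWeight a x i k (maxShift a x i k)) := by
  have hs := maxShift_nonneg ha hx i k
  have hsi : maxShift a x i k ≤ (1 - x i) * a i := min_le_left _ _
  have hsk : maxShift a x i k ≤ x k * a k := min_le_right _ _
  refine ⟨by simpa [sum_mul_shiftWeight, (ha i).ne', (ha k).ne'] using hx.1, fun j => ?_⟩
  by_cases hji : j = i
  · subst hji
    rw [shiftWeight_apply_left hik, ← le_sub_iff_add_le', div_le_iff₀ (ha j)]
    exact ⟨by linarith [(hx.2 j).1, div_nonneg hs (ha j).le], hsi⟩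
  by_cases hjk : j = k
  · subst hjk
    rw [shiftWeight_apply_right hik, sub_nonneg, div_le_iff₀ (ha j)]
    exact ⟨hsk, by linarith [(hx.2 j).2, div_nonneg hs (ha j).le]⟩
  · rw [shiftWeight_apply_of_ne hji hjk]
    exact hx.2 j

lemma div_le_div_of_optimalKP (ha : ∀ i, 0 < a i) (hx : optimalKP a c b x) {i k : Fin n}
    (hik : i ≠ k) (hi : x i < 1) (hk : 0 < x k) : c i / a i ≤ c k / a k := by
  by_contra! hlt
  have := hx.2 _ (feasibleKP_shiftWeight ha hx.1 hik)
  rw [sum_mul_shiftWeight] at this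
  nlinarith [mul_pos (maxShift_pos ha hi hk) (sub_pos.mpr hlt)]

lemma optimalKP_shiftWeight_of_fractional (ha : ∀ i, 0 < a i) (hx : optimalKP a c b x)
    {i k : Fin n} (hik : i ≠ k) (hi : i ∈ fracCoords x) (hk : k ∈ fracCoords x) :
    optimalKP a c b (shiftWeight a x i k (maxShift a x i k)) := by
  simp only [fracCoords, mem_filter, mem_univ, true_and] at hi hk
  have hratio : c i / a i = c k / a k :=
    le_antisymm (div_le_div_of_optimalKP ha hx hik hi.2 hk.1)
      (div_le_div_of_optimalKP ha hx hik.symm hk.2 hi.1)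
  refine ⟨feasibleKP_shiftWeight ha hx.1 hik, fun y hy => ?_⟩
  rw [sum_mul_shiftWeight, hratio, sub_self, mul_zero, add_zero]
  exact hx.2 y hy

lemma fracCoords_shiftWeight_ssubset (ha : ∀ i, 0 < a i) {i k : Fin n} (hik : i ≠ k)
    (hi : i ∈ fracCoords x) (hk : k ∈ fracCoords x) :
    fracCoords (shiftWeight a x i k (maxShift a x i k)) ⊂ fracCoords x := by
  refine (ssubset_iff_of_subset fun j hj => ?_).mpr ?_
  · by_cases hji : j = i
    · exact hji ▸ hi
    by_cases hjk : j = k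
    · exact hjk ▸ hk
    simpa [fracCoords, shiftWeight_apply_of_ne hji hjk] using hj
  · rcases min_cases ((1 - x i) * a i) (x k * a k) with ⟨hmin, _⟩ | ⟨hmin, _⟩
    · refine ⟨i, hi, ?_⟩
      simp [fracCoords, maxShift, hmin, shiftWeight_apply_left hik, (ha i).ne']
    · refine ⟨k, hk, ?_⟩
      simp [fracCoords, maxShift, hmin, shiftWeight_apply_right hik, (ha k).ne']

/-- Shifting weight between fractional items leaves at most one of them fractional. -/
lemma exists_optimalKP_card_fracCoords_le_one (d : Fin n → ℝ) (ha : ∀ i, 0 < a i)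
    (hx : optimalKP a c b x) :
    ∃ y, optimalKP a c b y ∧ ∑ i, a i * y i = ∑ i, a i * x i ∧
      ∑ i, d i * y i ≤ ∑ i, d i * x i ∧ #(fracCoords y) ≤ 1 := by
  induction hm : #(fracCoords x) using Nat.strong_induction_on generalizing x with
  | _ m ih =>
  by_cases hle : m ≤ 1
  · exact ⟨x, hx, rfl, le_rfl, hm ▸ hle⟩
  obtain ⟨i, hi, k, hk, hik⟩ := one_lt_card.mp (hm ▸ lt_of_not_ge hle)
  wlog hd : d i / a i ≤ d k / a k generalizing i k
  · exact this k hk i hi hik.symm (le_of_not_ge hd)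
  set y := shiftWeight a x i k (maxShift a x i k)
  have hy := optimalKP_shiftWeight_of_fractional ha hx hik hi hk
  obtain ⟨z, hz, hza, hzd, hzcard⟩ :=
    ih _ (hm ▸ card_lt_card (fracCoords_shiftWeight_ssubset ha hik hi hk)) hy rfl
  have hya : ∑ j, a j * y j = ∑ j, a j * x j := by
    simp [y, sum_mul_shiftWeight, (ha i).ne', (ha k).ne']
  have hyd : ∑ j, d j * y j ≤ ∑ j, d j * x j := by
    simp only [y, sum_mul_shiftWeight]
    nlinarith [maxShift_nonneg ha hx.1 i k]
  exact ⟨z, hz, hza.trans hya, hzd.trans hyd, hzcard⟩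

/-- The item `j` that the fractional prefix ends with: the fractional item if there is one,
otherwise a taken item of least ratio. -/
lemma exists_last_of_card_fracCoords_le_one (ha : ∀ i, 0 < a i) (hx : optimalKP a c b x)
    (hcard : #(fracCoords x) ≤ 1) (hpos : ∃ i, 0 < x i) :
    ∃ j, 0 < x j ∧ (∀ i, 0 < x i → c j / a j ≤ c i / a i) ∧ ∀ i ≠ j, x i = 0 ∨ x i = 1 := by
  by_cases hfrac : ∃ j, j ∈ fracCoords x
  · obtain ⟨j, hj⟩ := hfrac
    have hj' := hj
    simp only [fracCoords, mem_filter, mem_univ, true_and] at hj'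
    refine ⟨j, hj'.1, fun i hi => ?_, fun i hij => ?_⟩
    · rcases eq_or_ne j i with rfl | hji
      · exact le_rfl
      · exact div_le_div_of_optimalKP ha hx hji hj'.2 hi
    · exact eq_zero_or_eq_one_of_notMem_fracCoords hx.1
        fun hi => hij (card_le_one.mp hcard i hi j hj)
  · push Not at hfrac
    obtain ⟨j, hj, hmin⟩ := exists_min_image ({i | 0 < x i} : Finset (Fin n))
      (fun i => c i / a i) (by simpa [Finset.Nonempty] using hpos)
    simp only [mem_filter, mem_univ, true_and] at hj hmin
    exact ⟨j, hj, hmin, fun i _ => eq_zero_or_eq_one_of_notMem_fracCoords hx.1 (hfrac i)⟩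

end Knapsack

section IntervalOrder

/-- The interval order `P`. -/
def intervalLT (a cm cp : Fin n → ℝ) (i j : Fin n) : Prop := cp j / a j < cm i / a i

def adversaryValues (a d cm cp : Fin n → ℝ) (b : ℝ) : Set ℝ :=
  {v | ∃ c x : Fin n → ℝ, (∀ i, cm i ≤ c i ∧ c i ≤ cp i) ∧ optimalKP a c b x ∧
    v = ∑ i, d i * x i}

def prefixValues (a d cm cp : Fin n → ℝ) (b : ℝ) : Set ℝ :=
  {v | (b = 0 ∧ v = 0) ∨
    ∃ (J : Finset (Fin n)) (j : Fin n) (lam : ℝ),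
      J.Nonempty ∧ j ∈ J ∧
      (∀ k ∈ J, ∀ i : Fin n, intervalLT a cm cp i k → i ∈ J) ∧
      (∀ i ∈ J, ¬ intervalLT a cm cp j i) ∧
      0 < lam ∧ lam ≤ 1 ∧
      (∑ i, a i * fracVec J j lam i) = b ∧
      v = ∑ i, d i * fracVec J j lam i}

variable {a d cm cp c : Fin n → ℝ} {b : ℝ}

lemma not_intervalLT_of_div_le (ha : ∀ i, 0 < a i) (hc : ∀ i, cm i ≤ c i ∧ c i ≤ cp i)
    {i k : Fin n} (hik : c i / a i ≤ c k / a k) : ¬ intervalLT a cm cp i k := by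
  have hi := div_le_div_of_nonneg_right (hc i).1 (ha i).le
  have hk := div_le_div_of_nonneg_right (hc k).2 (ha k).le
  unfold intervalLT
  linarith

lemma mem_prefixValues_of_optimalKP (ha : ∀ i, 0 < a i) (hc : ∀ i, cm i ≤ c i ∧ c i ≤ cp i)
    (hb : 0 < b) {x : Fin n → ℝ} (hx : optimalKP a c b x) (hsum : ∑ i, a i * x i = b)
    (hcard : #(fracCoords x) ≤ 1) : ∑ i, d i * x i ∈ prefixValues a d cm cp b := by
  have hpos : ∃ i, 0 < x i := by
    by_contra! hnonpos
    have : ∑ i, a i * x i = 0 :=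
      sum_eq_zero fun i _ => by rw [le_antisymm (hnonpos i) (hx.1.2 i).1, mul_zero]
    linarith
  obtain ⟨j, hj, hjmin, h01⟩ := exists_last_of_card_fracCoords_le_one ha hx hcard hpos
  have hfrac := fracVec_eq_self h01
  refine .inr ⟨({i | 0 < x i} : Finset (Fin n)), j, x j, ?_, by simpa using hj,
    fun k hk i hik => ?_, fun i hi => ?_, hj, (hx.1.2 j).2, by rw [hfrac, hsum], by rw [hfrac]⟩
  · simpa [Finset.Nonempty] using hpos
  · simp only [mem_filter, mem_univ, true_and] at hk ⊢
    by_contra! hi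
    have hxi : x i = 0 := le_antisymm hi (hx.1.2 i).1
    refine not_intervalLT_of_div_le ha hc ?_ hik
    exact div_le_div_of_optimalKP ha hx (by rintro rfl; linarith) (by linarith) hk
  · simp only [mem_filter, mem_univ, true_and] at hi
    exact not_intervalLT_of_div_le ha hc (hjmin i hi)

/-- The profits making a fractional prefix optimal: clamp `t aᵢ` to `[cᵢ⁻, cᵢ⁺]`, where `t` is
the least ratio `cₖ⁺ / aₖ` over `J`. -/
lemma exists_optimalKP_fracVec (ha : ∀ i, 0 < a i) (hcm : ∀ i, 0 < cm i)
    (hcmcp : ∀ i, cm i ≤ cp i) {J : Finset (Fin n)} {j : Fin n} {lam : ℝ} (hj : j ∈ J)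
    (hlower : ∀ k ∈ J, ∀ i : Fin n, intervalLT a cm cp i k → i ∈ J)
    (hlast : ∀ i ∈ J, ¬ intervalLT a cm cp j i) (hlam0 : 0 < lam) (hlam1 : lam ≤ 1)
    (hsum : ∑ i, a i * fracVec J j lam i = b) :
    ∃ c : Fin n → ℝ, (∀ i, cm i ≤ c i ∧ c i ≤ cp i) ∧ optimalKP a c b (fracVec J j lam) := by
  obtain ⟨k, hk, hkmin⟩ := exists_min_image J (fun k => cp k / a k) ⟨j, hj⟩
  set t := cp k / a k
  have ht : 0 < t := div_pos ((hcm k).trans_le (hcmcp k)) (ha k)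
  have hcmt : ∀ i, ¬ intervalLT a cm cp i k → cm i ≤ t * a i := fun i hi =>
    (div_le_iff₀ (ha i)).mp (not_lt.mp hi)
  have hcpt : ∀ i ∈ J, t * a i ≤ cp i := fun i hi => (le_div_iff₀ (ha i)).mp (hkmin i hi)
  refine ⟨fun i => max (cm i) (min (cp i) (t * a i)),
    fun i => ⟨le_max_left _ _, max_le (hcmcp i) (min_le_left _ _)⟩,
    optimalKP_of_threshold ht.le (fun i => ?_) hsum fun i => ⟨fun hi => ?_, fun hi => ?_⟩⟩
  · unfold fracVec
    split_ifs <;> constructor <;> linarith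
  · by_cases hiJ : i ∈ J
    · have hij : i = j := by
        by_contra hij
        simp [fracVec, hij, hiJ] at hi
      subst hij
      rw [min_eq_right (hcpt i hiJ)]
      exact max_le (hcmt i (hlast k hk)) le_rfl
    · exact max_le (hcmt i fun hik => hiJ (hlower k hk i hik)) (min_le_right _ _)
  · have hiJ : i ∈ J := by
      by_contra hiJ
      have hij : i ≠ j := fun h => hiJ (h ▸ hj)
      simp [fracVec, hij, hiJ] at hi
    rw [min_eq_right (hcpt i hiJ)]
    exact le_max_right _ _

lemma prefixValues_subset_adversaryValues (ha : ∀ i, 0 < a i) (hcm : ∀ i, 0 < cm i)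
    (hcmcp : ∀ i, cm i ≤ cp i) : prefixValues a d cm cp b ⊆ adversaryValues a d cm cp b := by
  rintro v (⟨rfl, rfl⟩ | ⟨J, j, lam, -, hj, hlower, hlast, hlam0, hlam1, hsum, rfl⟩)
  · exact ⟨cm, 0, fun i => ⟨le_rfl, hcmcp i⟩, optimalKP_zero ha cm, by simp⟩
  · obtain ⟨c, hc, hopt⟩ :=
      exists_optimalKP_fracVec ha hcm hcmcp hj hlower hlast hlam0 hlam1 hsum
    exact ⟨c, _, hc, hopt, rfl⟩

lemma exists_prefixValue_le (ha : ∀ i, 0 < a i) (hcm : ∀ i, 0 < cm i) (hb0 : 0 ≤ b)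
    (hb1 : b ≤ ∑ i, a i) :
    ∀ w ∈ adversaryValues a d cm cp b, ∃ u ∈ prefixValues a d cm cp b, u ≤ w := by
  rintro w ⟨c, x, hc, hx, rfl⟩
  rcases hb0.eq_or_lt with rfl | hb
  · exact ⟨0, .inl ⟨rfl, rfl⟩, by simp [eq_zero_of_feasibleKP_zero ha hx.1]⟩
  have hsum := sum_eq_of_optimalKP ha (fun i => (hcm i).trans_le (hc i).1) hb1 hx
  obtain ⟨y, hy, hya, hyd, hcard⟩ := exists_optimalKP_card_fracCoords_le_one d ha hx
  exact ⟨_, mem_prefixValues_of_optimalKP ha hc hb hy (hya.trans hsum) hcard, hyd⟩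

lemma adversaryValues_nonempty (hcmcp : ∀ i, cm i ≤ cp i) (hb : 0 ≤ b) :
    (adversaryValues a d cm cp b).Nonempty := by
  obtain ⟨x, hx⟩ := exists_optimalKP a cm hb
  exact ⟨_, cm, x, fun i => ⟨le_rfl, hcmcp i⟩, hx, rfl⟩

lemma prefixValues_finite (ha : ∀ i, 0 < a i) : (prefixValues a d cm cp b).Finite := by
  let value : Finset (Fin n) × Fin n → ℝ := fun p =>
    ∑ i, d i * fracVec p.1 p.2 ((b - ∑ i ∈ p.1.erase p.2, a i) / a p.2) i
  refine ((Set.finite_range value).insert 0).subset ?_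
  rintro v (⟨-, rfl⟩ | ⟨J, j, lam, -, -, -, -, -, -, hsum, rfl⟩)
  · exact Set.mem_insert _ _
  · have hlam : lam = (b - ∑ i ∈ J.erase j, a i) / a j := by
      rw [sum_mul_fracVec] at hsum
      rw [eq_div_iff (ha j).ne']
      linarith
    exact Set.mem_insert_of_mem _ ⟨(J, j), by simp only [value, hlam]⟩

end IntervalOrder

/-- For interval uncertainty `U = [c⁻, c⁺]`, the adversary's problem
`min_{c ∈ U} min { dᵀx : x optimal for c }` has the same minimum as the problem
`min { dᵀ x^F : F a fractional prefix of the interval order P (or F = ∅) with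
aᵀ x^F = b }`, where `i <_P j ↔ cᵢ⁻/aᵢ > cⱼ⁺/aⱼ`. -/
theorem adversary_eq_fractional_prefix_min
    (n : ℕ) (a d cm cp : Fin n → ℝ) (ha : ∀ i, 0 < a i)
    (hcm : ∀ i, 0 < cm i) (hcmcp : ∀ i, cm i ≤ cp i)
    (b : ℝ) (hb0 : 0 ≤ b) (hb1 : b ≤ ∑ i, a i) :
    ∃ v : ℝ,
      IsLeast {v : ℝ | ∃ c x : Fin n → ℝ,
        (∀ i, cm i ≤ c i ∧ c i ≤ cp i) ∧ optimalKP a c b x ∧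
        v = ∑ i, d i * x i} v ∧
      IsLeast {v : ℝ | (b = 0 ∧ v = 0) ∨
        ∃ (J : Finset (Fin n)) (j : Fin n) (lam : ℝ),
          J.Nonempty ∧ j ∈ J ∧
          (∀ k ∈ J, ∀ i : Fin n, cp k / a k < cm i / a i → i ∈ J) ∧
          (∀ i ∈ J, ¬ (cp i / a i < cm j / a j)) ∧
          0 < lam ∧ lam ≤ 1 ∧
          (∑ i, a i * fracVec J j lam i) = b ∧
          v = ∑ i, d i * fracVec J j lam i} v :=
  exists_isLeast_of_forall_exists_le (prefixValues_finite ha)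
    (adversaryValues_nonempty hcmcp hb0) (prefixValues_subset_adversaryValues ha hcm hcmcp)
    (exists_prefixValue_le ha hcm hb0 hb1)
end

section
/- In the discrete uncorrelated reduction instance, let b ∈ [ε, M). Then for every c ∈ U and every optimal solution x of the follower's problem (max c^T x s.t. a^T x ≤ b, 0 ≤ x ≤ 1) such that d^T x = f(b) (i.e., c and x together attain the adversary's minimum), the solution satisfies x_i ∈ {0, 1} for all i ∈ {2, …, n−1}. -/
noncomputable section

/-- The constant `ε = 1/4` of the reduction instance. -/
def eps : ℝ := 1 / 4

/-- The constant `M = ∑ wᵢ + ε` of the reduction instance. -/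
def Mval (m : ℕ) (w : Fin m → ℤ) : ℝ := (∑ i, (w i : ℝ)) + eps

/-- Item sizes `a = (ε, w₁, …, w_m, M)` of the reduction instance. -/
def avec (m : ℕ) (w : Fin m → ℤ) : Fin (m + 2) → ℝ := fun i =>
  if h0 : (i : ℕ) = 0 then eps
  else if h1 : (i : ℕ) = m + 1 then Mval m w
  else (w ⟨(i : ℕ) - 1, by have := i.isLt; omega⟩ : ℝ)

/-- Leader's item values `d = (−M, −w₁, …, −w_m, ε)` of the reduction instance. -/
def dvec (m : ℕ) (w : Fin m → ℤ) : Fin (m + 2) → ℝ := fun i =>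
  if h0 : (i : ℕ) = 0 then -Mval m w
  else if h1 : (i : ℕ) = m + 1 then eps
  else -(w ⟨(i : ℕ) - 1, by have := i.isLt; omega⟩ : ℝ)

/-- Membership in the discrete uncorrelated uncertainty set
`U = ∏_{i=1}^{n} {i·aᵢ, (n+i)·aᵢ}` (with `n = m + 2` and 1-based indices). -/
def inU (m : ℕ) (w : Fin m → ℤ) (c : Fin (m + 2) → ℝ) : Prop :=
  ∀ i : Fin (m + 2),
    c i = ((i : ℕ) + 1) * avec m w i ∨ c i = ((m + 2) + ((i : ℕ) + 1)) * avec m w i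

/-- The leader's objective `f(b) = min_{c ∈ U} min { dᵀx : x optimal for c }`
of the reduction instance (pessimistic view). -/
def fval (m : ℕ) (w : Fin m → ℤ) (b : ℝ) : ℝ :=
  sInf {v : ℝ | ∃ c x : Fin (m + 2) → ℝ,
    inU m w c ∧ optimalKP (avec m w) c b x ∧ v = ∑ i, dvec m w i * x i}

/-- `V` is a subset sum of `{w₁, …, w_m}`. -/
def isSubsetSum (m : ℕ) (w : Fin m → ℤ) (V : ℝ) : Prop :=
  ∃ S : Finset (Fin m), V = ∑ i ∈ S, (w i : ℝ)

/-! Suppose a middle item `i` were fractional. Item `n` is never full since `b < M`, and its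
profit-to-size ratio is at least `n`, so the exchange argument forces `cᵢ` to be the high profit,
of ratio at least `n + 2`; item `1`, of ratio at most `n + 1`, is then empty. Hence
`dᵀx > -∑ w`. But if the adversary raises only the profit of item `1`, the follower may pack
item `1` and fill the remaining capacity with item `n`, which gives
`dᵀx = -M + ε (b - ε) / M < -∑ w`; so `(c, x)` does not attain `f(b)`. -/

section Knapsack

variable {n : ℕ} {a c x : Fin n → ℝ} {b : ℝ}

theorem feasibleKP.lt_one_of_lt (hx : feasibleKP a b x) (ha : ∀ i, 0 ≤ a i) {k : Fin n}
    (hb : b < a k) : x k < 1 := by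
  have hk : a k * x k ≤ b :=
    (Finset.single_le_sum (fun i _ => mul_nonneg (ha i) (hx.2 i).1) (Finset.mem_univ k)).trans
      hx.1
  by_contra! h
  nlinarith [ha k]

theorem feasibleKP.sum_min_le (hx : feasibleKP a b x) (d : Fin n → ℝ) :
    ∑ i, min (d i) 0 ≤ ∑ i, d i * x i := by
  refine Finset.sum_le_sum fun i _ => ?_
  obtain ⟨hx0, hx1⟩ := hx.2 i
  nlinarith [min_le_left (d i) 0, min_le_right (d i) 0]

theorem sum_mul_add_single_sub_single [DecidableEq (Fin n)] (f : Fin n → ℝ) (j k : Fin n)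
    (u v : ℝ) :
    ∑ i, f i * (x + Pi.single k u - Pi.single j v : Fin n → ℝ) i
      = ∑ i, f i * x i + f k * u - f j * v := by
  simp [mul_add, mul_sub, Finset.sum_add_distrib, Finset.sum_sub_distrib, Pi.single_apply]

/-- Exchange argument: otherwise shifting capacity from item `j` to item `k` would increase the
profit. -/
theorem optimalKP.div_le_div_of_pos_of_lt_one (hx : optimalKP a c b x) {j k : Fin n}
    (hjk : j ≠ k) (haj : 0 < a j) (hak : 0 < a k) (hxj : 0 < x j) (hxk : x k < 1) :
    c k / a k ≤ c j / a j := by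
  classical
  by_contra! hlt
  set t := min (x j * a j) ((1 - x k) * a k)
  have ht : 0 < t := lt_min (mul_pos hxj haj) (mul_pos (by linarith) hak)
  have htj : t / a j ≤ x j := (div_le_iff₀ haj).2 (min_le_left _ _)
  have htk : t / a k ≤ 1 - x k := (div_le_iff₀ hak).2 (min_le_right _ _)
  have htj0 : 0 ≤ t / a j := (div_pos ht haj).le
  have htk0 : 0 ≤ t / a k := (div_pos ht hak).le
  set y := x + Pi.single k (t / a k) - Pi.single j (t / a j)
  have hy : feasibleKP a b y := by
    refine ⟨?_, fun i => ?_⟩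
    · rw [sum_mul_add_single_sub_single, mul_div_cancel₀ _ hak.ne', mul_div_cancel₀ _ haj.ne']
      simpa using hx.1.1
    · obtain ⟨hi0, hi1⟩ := hx.1.2 i
      simp only [y, Pi.add_apply, Pi.sub_apply, Pi.single_apply]
      split_ifs with hik hij hij
      · exact absurd (hik ▸ hij) hjk.symm
      all_goals subst_vars; constructor <;> linarith
  have hgain := hx.2 y hy
  rw [sum_mul_add_single_sub_single] at hgain
  have : c k * (t / a k) - c j * (t / a j) = t * (c k / a k - c j / a j) := by ring
  nlinarith

/-- Weak LP duality: `∑ᵢ max (cᵢ - λ aᵢ) 0 + λ b` bounds every feasible profit. -/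
theorem optimalKP_of_sum_mul_eq {lam : ℝ} (hlam : 0 ≤ lam) (hx : feasibleKP a b x)
    (hval : ∑ i, c i * x i = ∑ i, max (c i - lam * a i) 0 + lam * b) :
    optimalKP a c b x := by
  refine ⟨hx, fun y hy => ?_⟩
  calc ∑ i, c i * y i = ∑ i, (c i - lam * a i) * y i + lam * ∑ i, a i * y i := by
        rw [Finset.mul_sum, ← Finset.sum_add_distrib]
        exact Finset.sum_congr rfl fun i _ => by ring
    _ ≤ ∑ i, max (c i - lam * a i) 0 + lam * b := by
        refine add_le_add (Finset.sum_le_sum fun i _ => ?_) (mul_le_mul_of_nonneg_left hy.1 hlam)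
        obtain ⟨hy0, hy1⟩ := hy.2 i
        calc (c i - lam * a i) * y i ≤ max (c i - lam * a i) 0 * y i :=
              mul_le_mul_of_nonneg_right (le_max_left _ _) hy0
          _ ≤ max (c i - lam * a i) 0 := mul_le_of_le_one_right (le_max_right _ _) hy1
    _ = ∑ i, c i * x i := hval.symm

end Knapsack

theorem Fin.sum_univ_add_two {M : Type*} [AddCommMonoid M] {m : ℕ} (f : Fin (m + 2) → M) :
    ∑ k, f k = f 0 + ∑ k : Fin m, f k.castSucc.succ + f (Fin.last (m + 1)) := by
  rw [Fin.sum_univ_succ, Fin.sum_univ_castSucc]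
  exact (add_assoc _ _ _).symm

section Instance

variable {m : ℕ} {w : Fin m → ℤ}

theorem eps_pos : 0 < eps := by norm_num [eps]

@[simp] theorem avec_zero : avec m w 0 = eps := by simp [avec]

@[simp] theorem avec_last : avec m w (Fin.last (m + 1)) = Mval m w := by simp [avec]

@[simp] theorem avec_succ_castSucc (k : Fin m) : avec m w k.castSucc.succ = w k := by
  simp [avec, k.isLt.ne]

@[simp] theorem dvec_zero : dvec m w 0 = -Mval m w := by simp [dvec]

@[simp] theorem dvec_last : dvec m w (Fin.last (m + 1)) = eps := by simp [dvec]

@[simp] theorem dvec_succ_castSucc (k : Fin m) : dvec m w k.castSucc.succ = -w k := by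
  simp [dvec, k.isLt.ne]

theorem Mval_pos (hw : ∀ i, 0 < w i) : 0 < Mval m w := by
  have : (0 : ℝ) ≤ ∑ i, (w i : ℝ) := Finset.sum_nonneg fun i _ => by exact_mod_cast (hw i).le
  rw [Mval]
  linarith [eps_pos]

theorem avec_pos (hw : ∀ i, 0 < w i) (k : Fin (m + 2)) : 0 < avec m w k := by
  cases k using Fin.cases with
  | zero => simpa using eps_pos
  | succ k =>
    cases k using Fin.lastCases with
    | last => simpa using Mval_pos hw
    | cast k => simpa using hw k

theorem inU.div_avec_eq {c : Fin (m + 2) → ℝ} (hw : ∀ i, 0 < w i) (hc : inU m w c)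
    (k : Fin (m + 2)) :
    c k / avec m w k = (k : ℕ) + 1 ∨ c k / avec m w k = m + 2 + ((k : ℕ) + 1) := by
  rcases hc k with h | h
  · exact .inl (by rw [h, mul_div_cancel_right₀ _ (avec_pos hw k).ne'])
  · exact .inr (by rw [h, mul_div_cancel_right₀ _ (avec_pos hw k).ne'])

theorem fval_le_sum_dvec_mul {b : ℝ} {c x : Fin (m + 2) → ℝ} (hc : inU m w c)
    (hx : optimalKP (avec m w) c b x) : fval m w b ≤ ∑ i, dvec m w i * x i := by
  refine csInf_le ⟨∑ i, min (dvec m w i) 0, ?_⟩ ⟨c, x, hc, hx, rfl⟩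
  rintro v ⟨_, y, _, hy, rfl⟩
  exact hy.1.sum_min_le _

/-- The adversary's profits that raise only item 1 to its high value `(n + 1) ε`; against them
the follower packs item 1 and fills the remaining capacity with item `n`, whose ratio `n` is the
largest among the other items. -/
def firstHighProfit (m : ℕ) (w : Fin m → ℤ) : Fin (m + 2) → ℝ :=
  Function.update (fun k => ((k : ℕ) + 1) * avec m w k) 0 ((m + 2 + 1) * eps)

def firstHighSolution (m : ℕ) (w : Fin m → ℤ) (b : ℝ) : Fin (m + 2) → ℝ := fun k =>
  if k = 0 then 1 else if k = Fin.last (m + 1) then (b - eps) / Mval m w else 0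

theorem inU_firstHighProfit : inU m w (firstHighProfit m w) := by
  intro k
  rcases eq_or_ne k 0 with rfl | hk
  · simp [firstHighProfit]
  · simp [firstHighProfit, hk]

section FirstHigh

variable {b : ℝ}

theorem feasibleKP_firstHighSolution (hw : ∀ i, 0 < w i) (hb0 : eps ≤ b) (hb1 : b < Mval m w) :
    feasibleKP (avec m w) b (firstHighSolution m w b) := by
  have hM := Mval_pos hw
  refine ⟨?_, fun k => ?_⟩
  · simp [Fin.sum_univ_add_two, firstHighSolution, mul_div_cancel₀ _ hM.ne']
  · have hq : 0 ≤ (b - eps) / Mval m w ∧ (b - eps) / Mval m w ≤ 1 :=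
      ⟨div_nonneg (by linarith) hM.le, (div_le_one hM).2 (by linarith [eps_pos])⟩
    simp only [firstHighSolution]
    split_ifs <;> simp [hq]

/-- The dual multiplier is the ratio `n` of the item filling the remaining capacity. -/
theorem optimalKP_firstHighSolution (hw : ∀ i, 0 < w i) (hb0 : eps ≤ b) (hb1 : b < Mval m w) :
    optimalKP (avec m w) (firstHighProfit m w) b (firstHighSolution m w b) := by
  refine optimalKP_of_sum_mul_eq (lam := m + 2) (by positivity)
    (feasibleKP_firstHighSolution hw hb0 hb1) ?_
  have hmid (k : Fin m) : max (((k : ℕ) + 1 + 1) * (w k : ℝ) - (m + 2) * w k) 0 = 0 := by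
    have : ((k : ℕ) : ℝ) + 1 ≤ m := by exact_mod_cast k.isLt
    exact max_eq_right (by nlinarith [(Int.cast_pos.2 (hw k) : (0 : ℝ) < w k)])
  have hfirst : max (((m : ℝ) + 2 + 1) * eps - (m + 2) * eps) 0 = eps := by
    rw [show ((m : ℝ) + 2 + 1) * eps - (m + 2) * eps = eps by ring]
    exact max_eq_left eps_pos.le
  have hlast : max (((m : ℝ) + 1 + 1) * Mval m w - (m + 2) * Mval m w) 0 = 0 := by
    rw [show ((m : ℝ) + 1 + 1) * Mval m w - (m + 2) * Mval m w = 0 by ring]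
    exact max_self 0
  simp [Fin.sum_univ_add_two, firstHighSolution, firstHighProfit, hmid]
  rw [hfirst, hlast]
  field_simp [(Mval_pos hw).ne']
  ring

theorem fval_lt_neg_sum (hw : ∀ i, 0 < w i) (hb0 : eps ≤ b) (hb1 : b < Mval m w) :
    fval m w b < -∑ i, (w i : ℝ) := by
  have hM := Mval_pos hw
  have hval : ∑ i, dvec m w i * firstHighSolution m w b i
      = -Mval m w + eps * ((b - eps) / Mval m w) := by
    simp [Fin.sum_univ_add_two, firstHighSolution]
  calc fval m w b ≤ -Mval m w + eps * ((b - eps) / Mval m w) :=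
        hval ▸ fval_le_sum_dvec_mul inU_firstHighProfit (optimalKP_firstHighSolution hw hb0 hb1)
    _ < -Mval m w + eps * 1 := by
        gcongr
        exacts [eps_pos, (div_lt_one hM).2 (by linarith [eps_pos])]
    _ = -∑ i, (w i : ℝ) := by rw [Mval]; ring

end FirstHigh

theorem neg_sum_lt_sum_dvec_mul (hw : ∀ i, 0 < w i) {b : ℝ} {x : Fin (m + 2) → ℝ}
    (hx : feasibleKP (avec m w) b x) (hx0 : x 0 = 0) {j : Fin m} (hxj : x j.castSucc.succ < 1) :
    -∑ i, (w i : ℝ) < ∑ i, dvec m w i * x i := by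
  have hw' (k : Fin m) : (0 : ℝ) < w k := Int.cast_pos.2 (hw k)
  have hmid : ∑ k : Fin m, (w k : ℝ) * x k.castSucc.succ < ∑ k, (w k : ℝ) :=
    Finset.sum_lt_sum (fun k _ => mul_le_of_le_one_right (hw' k).le (hx.2 _).2)
      ⟨j, Finset.mem_univ _, mul_lt_of_lt_one_right (hw' j) hxj⟩
  have hlast : 0 ≤ eps * x (Fin.last (m + 1)) := mul_nonneg eps_pos.le (hx.2 _).1
  simp only [Fin.sum_univ_add_two, dvec_zero, dvec_last, dvec_succ_castSucc, hx0, neg_mul,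
    Finset.sum_neg_distrib]
  linarith

section Follower

variable {b : ℝ} {c x : Fin (m + 2) → ℝ}

theorem lt_div_avec_of_optimalKP (hw : ∀ i, 0 < w i) (hc : inU m w c)
    (hx : optimalKP (avec m w) c b x) (hb : b < Mval m w) {j : Fin m}
    (hxj : 0 < x j.castSucc.succ) :
    (m : ℝ) + 3 < c j.castSucc.succ / avec m w j.castSucc.succ := by
  have hxL : x (Fin.last (m + 1)) < 1 :=
    hx.1.lt_one_of_lt (fun k => (avec_pos hw k).le) (by simpa using hb)
  have hle := hx.div_le_div_of_pos_of_lt_one (by simp) (avec_pos hw _) (avec_pos hw _) hxj hxL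
  have hjm : ((j : ℕ) : ℝ) + 1 ≤ m := by exact_mod_cast j.isLt
  rcases hc.div_avec_eq hw j.castSucc.succ with h | h <;>
    rcases hc.div_avec_eq hw (Fin.last (m + 1)) with h' | h' <;>
    simp only [h, h', Fin.val_succ, Fin.val_castSucc, Fin.val_last] at hle ⊢ <;>
    push_cast at hle ⊢ <;> linarith

theorem eq_zero_of_optimalKP (hw : ∀ i, 0 < w i) (hc : inU m w c)
    (hx : optimalKP (avec m w) c b x) {j : Fin m}
    (hj : (m : ℝ) + 3 < c j.castSucc.succ / avec m w j.castSucc.succ)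
    (hxj : x j.castSucc.succ < 1) : x 0 = 0 := by
  by_contra h0
  have hle := hx.div_le_div_of_pos_of_lt_one (Fin.succ_ne_zero _).symm (avec_pos hw _)
    (avec_pos hw _) ((hx.1.2 0).1.lt_of_ne' h0) hxj
  rcases hc.div_avec_eq hw 0 with h | h <;> simp only [h, Fin.val_zero] at hle <;>
    push_cast at hle <;> linarith

end Follower

theorem discrete_uncorrelated_binary_components_general
    (m : ℕ) (w : Fin m → ℤ) (hw : ∀ i, 1 ≤ w i)
    (b : ℝ) (hb0 : eps ≤ b) (hb1 : b < Mval m w)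
    (c x : Fin (m + 2) → ℝ) (hc : inU m w c)
    (hx : optimalKP (avec m w) c b x)
    (hattain : (∑ i, dvec m w i * x i) = fval m w b)
    (i : Fin (m + 2)) (hi0 : 0 < (i : ℕ)) (hi1 : (i : ℕ) < m + 1) :
    x i = 0 ∨ x i = 1 := by
  have hw : ∀ i, 0 < w i := hw
  obtain ⟨j, rfl⟩ : ∃ j : Fin m, j.castSucc.succ = i :=
    ⟨⟨i - 1, by omega⟩, Fin.ext (by simp only [Fin.val_succ, Fin.val_castSucc]; omega)⟩
  by_contra! hfrac
  have hxj0 : 0 < x j.castSucc.succ := (hx.1.2 _).1.lt_of_ne' hfrac.1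
  have hxj1 : x j.castSucc.succ < 1 := (hx.1.2 _).2.lt_of_ne hfrac.2
  have hx0 := eq_zero_of_optimalKP hw hc hx (lt_div_avec_of_optimalKP hw hc hx hb1 hxj0) hxj1
  have := neg_sum_lt_sum_dvec_mul hw hx.1 hx0 hxj1
  have := fval_lt_neg_sum hw hb0 hb1
  linarith

/-- In the discrete uncorrelated reduction instance, for `b ∈ [ε, M)`, every
adversary-optimal pair `(c, x)` yields a follower's solution with
`xᵢ ∈ {0, 1}` for all items `i ∈ {2, …, n−1}`. -/
theorem discrete_uncorrelated_binary_components
    (m : ℕ) (w : Fin m → ℤ) (W : ℤ) (hw : ∀ i, 1 ≤ w i)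
    (hW1 : 1 ≤ W) (hW2 : W ≤ (∑ i, w i) - 1)
    (b : ℝ) (hb0 : eps ≤ b) (hb1 : b < Mval m w)
    (c x : Fin (m + 2) → ℝ) (hc : inU m w c)
    (hx : optimalKP (avec m w) c b x)
    (hattain : (∑ i, dvec m w i * x i) = fval m w b)
    (i : Fin (m + 2)) (hi0 : 0 < (i : ℕ)) (hi1 : (i : ℕ) < m + 1) :
    x i = 0 ∨ x i = 1 :=
  discrete_uncorrelated_binary_components_general m w hw b hb0 hb1 c x hc hx hattain i hi0 hi1
end Instance
end
end

section
/- In the discrete uncorrelated reduction instance, let V_1 < V_2 be two consecutive subset sums of {w_1, …, w_m} (i.e., both are of the form Σ_{i∈S} w_i for some S ⊆ {1,…,m}, and no subset sum lies strictly between them). Then f(b) = −M − V_1 + (ε/M)(b − V_1 − ε) for all b ∈ [V_1 + ε, V_2), and f(b) = min{ −M − V_1 + (ε/M)(b − V_1 − ε), −(M/ε)(b − V_2) − V_2 } for all b ∈ [V_2, V_2 + ε). -/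
/-!
The follower solves a continuous knapsack problem, greedily by profit-to-size ratio; under
every profit vector of `U` the ratios `i + 1`, `m + 2 + i + 1` of distinct items are distinct.
Once the budget is tight, `dᵀx = -b + (M + ε) x_M - (M - ε) x_ε` for the big item `M` and the
small item `ε`. If `x_ε = 0` this is at least `-b`, which dominates both branches of `f`.
Otherwise the ratio order forces the middle items to be packed integrally, to a subset sum `V`,
and either `x_ε = 1`, so that `V ≤ V₁` and the value is at least the first branch, or `x_M = 0`
with `x_ε` fractional, so that `V ≥ V₂` and the value is at least the second branch. Both
branches are attained: pack a subset of sum `V₁` with `x_ε = 1` and `x_M` fractional, or one of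
sum `V₂` with `x_ε` fractional and `x_M = 0`, under profits for which this is the greedy order.
-/

noncomputable section

open Finset

section Knapsack

variable {k : ℕ} {a r x : Fin k → ℝ} {b : ℝ}

lemma sum_mul_add_single_s11 {ι R : Type*} [Fintype ι] [DecidableEq ι]
    [NonUnitalNonAssocSemiring R] (f x : ι → R) (i : ι) (u : R) :
    ∑ j, f j * (x + Pi.single i u : ι → R) j = ∑ j, f j * x j + f i * u := by
  simp [mul_add, sum_add_distrib, Pi.single_apply]

theorem optimalKP.sum_eq_of_lt_sum (ha : ∀ i, 0 < a i) (hr : ∀ i, 0 < r i)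
    (hb : b < ∑ i, a i) (hx : optimalKP a (fun i => r i * a i) b x) :
    ∑ i, a i * x i = b := by
  by_contra hne
  have hslack : 0 < b - ∑ j, a j * x j := sub_pos.2 (lt_of_le_of_ne hx.1.1 hne)
  obtain ⟨i, hi⟩ : ∃ i, x i < 1 := by
    by_contra! h
    have : ∑ j, a j * x j = ∑ j, a j :=
      sum_congr rfl fun j _ => by rw [le_antisymm (hx.1.2 j).2 (h j), mul_one]
    linarith
  set δ := min ((b - ∑ j, a j * x j) / a i) (1 - x i)
  have hδ : 0 < δ := lt_min (div_pos hslack (ha i)) (by linarith)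
  have hδa : δ * a i ≤ b - ∑ j, a j * x j := (le_div_iff₀ (ha i)).1 (min_le_left _ _)
  have hδx : δ ≤ 1 - x i := min_le_right _ _
  have hfeas : feasibleKP a b (x + Pi.single i δ) := by
    refine ⟨by rw [sum_mul_add_single_s11]; linarith, fun j => ?_⟩
    rcases eq_or_ne j i with rfl | hji
    · simp only [Pi.add_apply, Pi.single_eq_same]
      constructor <;> linarith [(hx.1.2 j).1]
    · simpa [hji] using hx.1.2 j
  have := hx.2 _ hfeas
  rw [sum_mul_add_single_s11] at this
  nlinarith [mul_pos (mul_pos (hr i) (ha i)) hδ]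

theorem optimalKP.eq_one_or_eq_zero_of_lt (ha : ∀ i, 0 < a i)
    (hx : optimalKP a (fun i => r i * a i) b x) {i j : Fin k} (h : r j < r i) :
    x i = 1 ∨ x j = 0 := by
  by_contra! hij
  have hi : x i < 1 := lt_of_le_of_ne (hx.1.2 i).2 hij.1
  have hj : 0 < x j := lt_of_le_of_ne (hx.1.2 j).1 hij.2.symm
  have hne : i ≠ j := by rintro rfl; linarith
  set δ := min ((1 - x i) / a j) (x j / a i)
  have hδ : 0 < δ := lt_min (div_pos (by linarith) (ha j)) (div_pos hj (ha i))
  have hδi : δ * a j ≤ 1 - x i := (le_div_iff₀ (ha j)).1 (min_le_left _ _)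
  have hδj : δ * a i ≤ x j := (le_div_iff₀ (ha i)).1 (min_le_right _ _)
  -- trade size `δ * a i * a j` of item `j` for the same size of item `i`
  set y := x + Pi.single i (δ * a j) + Pi.single j (-(δ * a i))
  have hy : ∀ f : Fin k → ℝ, ∑ l, f l * y l
      = ∑ l, f l * x l + δ * (f i * a j - f j * a i) := by
    intro f
    rw [sum_mul_add_single_s11, sum_mul_add_single_s11]
    ring
  have hfeas : feasibleKP a b y := by
    refine ⟨by rw [hy, mul_comm (a i), sub_self, mul_zero, add_zero]; exact hx.1.1,
      fun l => ?_⟩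
    have hl := hx.1.2 l
    rcases eq_or_ne l i with rfl | hli
    · simp only [y, Pi.add_apply, Pi.single_eq_same, Pi.single_eq_of_ne hne]
      constructor <;> nlinarith [mul_pos hδ (ha j)]
    rcases eq_or_ne l j with rfl | hlj
    · simp only [y, Pi.add_apply, Pi.single_eq_same, Pi.single_eq_of_ne hli]
      constructor <;> nlinarith [mul_pos hδ (ha i)]
    · simpa [y, hli, hlj] using hl
  have := hx.2 y hfeas
  rw [hy] at this
  nlinarith [mul_pos hδ (mul_pos (ha i) (ha j))]

theorem optimalKP.of_threshold (ha : ∀ i, 0 ≤ a i) {ρ : ℝ} (hρ : 0 ≤ ρ)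
    (hfeas : feasibleKP a b x) (htight : ∑ i, a i * x i = b)
    (hle : ∀ i, x i < 1 → r i ≤ ρ) (hge : ∀ i, 0 < x i → ρ ≤ r i) :
    optimalKP a (fun i => r i * a i) b x := by
  refine ⟨hfeas, fun y hy => ?_⟩
  have hterm : ∀ i, r i * a i * y i - r i * a i * x i ≤ ρ * (a i * y i - a i * x i) := by
    intro i
    rcases lt_trichotomy (x i) (y i) with h | h | h
    · nlinarith [mul_nonneg (mul_nonneg (sub_nonneg.2 (hle i (h.trans_le (hy.2 i).2))) (ha i))
        (sub_nonneg.2 h.le)]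
    · rw [h]; simp
    · nlinarith [mul_nonneg (mul_nonneg (sub_nonneg.2 (hge i ((hy.2 i).1.trans_lt h))) (ha i))
        (sub_nonneg.2 h.le)]
  have := sum_le_sum fun i (_ : i ∈ univ) => hterm i
  rw [← mul_sum, sum_sub_distrib, sum_sub_distrib, htight] at this
  nlinarith [hy.1]

end Knapsack


namespace isSubsetSum

variable {m : ℕ} {w : Fin m → ℤ}

lemma nonneg {V : ℝ} (hw : ∀ i, 0 ≤ w i) (hV : isSubsetSum m w V) : 0 ≤ V := by
  obtain ⟨S, rfl⟩ := hV
  exact sum_nonneg fun i _ => Int.cast_nonneg_iff.2 (hw i)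

lemma le_Mval_sub_eps {V : ℝ} (hw : ∀ i, 0 ≤ w i) (hV : isSubsetSum m w V) :
    V ≤ Mval m w - eps := by
  obtain ⟨S, rfl⟩ := hV
  rw [Mval, add_sub_cancel_right]
  exact sum_le_sum_of_subset_of_nonneg (subset_univ S) fun i _ _ => Int.cast_nonneg_iff.2 (hw i)

lemma add_one_le {V₁ V₂ : ℝ} (hV₁ : isSubsetSum m w V₁) (hV₂ : isSubsetSum m w V₂)
    (h : V₁ < V₂) : V₁ + 1 ≤ V₂ := by
  obtain ⟨S₁, rfl⟩ := hV₁
  obtain ⟨S₂, rfl⟩ := hV₂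
  exact_mod_cast Int.add_one_le_of_lt (by exact_mod_cast h)

end isSubsetSum

namespace DiscreteUncorrelated

section Arithmetic

variable {M ε V₁ V₂ b : ℝ}

lemma branch_le_neg (hε : 0 < ε) (hεM : ε ≤ M) (hV₁ : 0 ≤ V₁) (hV₂ : V₂ + ε ≤ M)
    (hb₂ : b < V₂ + ε) :
    -M - V₁ + ε / M * (b - V₁ - ε) ≤ -b ∨ (V₂ ≤ b ∧ -(M / ε) * (b - V₂) - V₂ ≤ -b) := by
  by_cases hb : V₂ ≤ b
  · refine .inr ⟨hb, ?_⟩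
    have : 1 ≤ M / ε := (one_le_div hε).2 hεM
    nlinarith
  · refine .inl ?_
    have : ε / M * (b - V₁ - ε) ≤ ε := by
      rw [div_mul_eq_mul_div, div_le_iff₀ (hε.trans_le hεM)]
      nlinarith
    linarith

lemma branch_le_of_budget_eq {V s t : ℝ} (hε : 0 < ε) (hεM : ε ≤ M)
    (hV : V ≤ V₁ ∨ V₂ ≤ V) (hb₁ : V₁ + ε ≤ b) (hb₂ : b < V₂ + ε)
    (hbudget : ε * s + V + M * t = b) (hs₀ : 0 < s) (hs₁ : s ≤ 1) (ht : 0 ≤ t)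
    (hst : s = 1 ∨ t = 0) :
    -M - V₁ + ε / M * (b - V₁ - ε) ≤ -b + (M + ε) * t - (M - ε) * s ∨
      (V₂ ≤ b ∧ -(M / ε) * (b - V₂) - V₂ ≤ -b + (M + ε) * t - (M - ε) * s) := by
  have hM : 0 < M := hε.trans_le hεM
  rcases hs₁.eq_or_lt with rfl | hs₁
  · refine .inl ?_
    have hV₁ : V ≤ V₁ := hV.resolve_right (by nlinarith)
    have : ε / M * (b - V₁ - ε) ≤ ε / M * (M * t) :=
      mul_le_mul_of_nonneg_left (by linarith) (div_nonneg hε.le hM.le)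
    rw [← mul_assoc, div_mul_cancel₀ _ hM.ne'] at this
    linarith
  · obtain rfl : t = 0 := hst.resolve_left hs₁.ne
    have hV₂ : V₂ ≤ V := hV.resolve_left (by nlinarith)
    have hs : s ≤ (b - V₂) / ε := (le_div_iff₀ hε).2 (by linarith)
    have : -(M / ε) * (b - V₂) = -(M - ε) * ((b - V₂) / ε) - (b - V₂) := by
      field_simp; ring
    refine .inr ⟨by nlinarith, ?_⟩
    nlinarith [mul_le_mul_of_nonneg_left hs (sub_nonneg.2 hεM)]

end Arithmetic

variable {m : ℕ} {w : Fin m → ℤ}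

def mid (j : Fin m) : Fin (m + 2) := j.castSucc.succ

@[simp] lemma val_mid (j : Fin m) : (mid j : ℕ) = j + 1 := rfl

lemma mid_injective : Function.Injective (mid : Fin m → Fin (m + 2)) :=
  Fin.succ_injective _ |>.comp (Fin.castSucc_injective _)

@[simp] lemma mid_ne_zero (j : Fin m) : mid j ≠ 0 := Fin.succ_ne_zero _

@[simp] lemma mid_ne_last (j : Fin m) : mid j ≠ Fin.last (m + 1) := by
  simp [Fin.ext_iff, j.isLt.ne]

lemma eq_zero_or_eq_last_or_eq_mid (i : Fin (m + 2)) :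
    i = 0 ∨ i = Fin.last (m + 1) ∨ ∃ j, i = mid j := by
  induction i using Fin.cases with
  | zero => exact .inl rfl
  | succ k =>
    induction k using Fin.lastCases with
    | last => exact .inr (.inl rfl)
    | cast j => exact .inr (.inr ⟨j, rfl⟩)

lemma sum_univ_eq_zero_add_mid_add_last (f : Fin (m + 2) → ℝ) :
    ∑ i, f i = f 0 + ∑ j, f (mid j) + f (Fin.last (m + 1)) := by
  rw [Fin.sum_univ_succ, Fin.sum_univ_castSucc, ← add_assoc]
  rfl

@[simp] lemma avec_zero : avec m w 0 = eps := rfl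

@[simp] lemma avec_last : avec m w (Fin.last (m + 1)) = Mval m w := by
  simp [avec]

@[simp] lemma avec_mid (j : Fin m) : avec m w (mid j) = w j := by
  simp [avec, mid, j.isLt.ne]

@[simp] lemma dvec_zero : dvec m w 0 = -Mval m w := rfl

@[simp] lemma dvec_last : dvec m w (Fin.last (m + 1)) = eps := by
  simp [dvec]

@[simp] lemma dvec_mid (j : Fin m) : dvec m w (mid j) = -w j := by
  simp [dvec, mid, j.isLt.ne]

lemma eps_pos : 0 < eps := by norm_num [eps]

lemma eps_le_Mval (hw : ∀ i, 0 ≤ w i) : eps ≤ Mval m w := by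
  have : (0 : ℝ) ≤ ∑ i, (w i : ℝ) := sum_nonneg fun i _ => Int.cast_nonneg_iff.2 (hw i)
  unfold Mval; linarith

lemma avec_pos (hw : ∀ i, 0 < w i) (i : Fin (m + 2)) : 0 < avec m w i := by
  rcases eq_zero_or_eq_last_or_eq_mid i with rfl | rfl | ⟨j, rfl⟩
  · exact eps_pos
  · rw [avec_last]
    exact eps_pos.trans_le (eps_le_Mval fun i => (hw i).le)
  · simpa using hw j

lemma sum_avec_mul (x : Fin (m + 2) → ℝ) : ∑ i, avec m w i * x i
    = eps * x 0 + ∑ j, (w j : ℝ) * x (mid j) + Mval m w * x (Fin.last (m + 1)) := by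
  simp [sum_univ_eq_zero_add_mid_add_last]

lemma sum_dvec_mul (x : Fin (m + 2) → ℝ) : ∑ i, dvec m w i * x i
    = -∑ i, avec m w i * x i + (Mval m w + eps) * x (Fin.last (m + 1))
      - (Mval m w - eps) * x 0 := by
  simp [sum_univ_eq_zero_add_mid_add_last, sum_neg_distrib]
  ring

lemma sum_avec : ∑ i, avec m w i = 2 * Mval m w := by
  have := sum_avec_mul (w := w) 1
  simp only [Pi.one_apply, mul_one] at this
  rw [this, Mval]
  ring

/-- The profit-to-size ratio of item `i` under the profit vector of `U` that takes the larger
of its two values exactly on `H`. -/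
def ratio (H : Finset (Fin (m + 2))) (i : Fin (m + 2)) : ℝ :=
  if i ∈ H then (m + 2) + ((i : ℕ) + 1) else (i : ℕ) + 1

lemma ratio_pos (H : Finset (Fin (m + 2))) (i : Fin (m + 2)) : 0 < ratio H i := by
  unfold ratio; split_ifs <;> positivity

lemma inU_iff {c : Fin (m + 2) → ℝ} :
    inU m w c ↔ ∃ H, c = fun i => ratio H i * avec m w i := by
  constructor
  · intro hc
    refine ⟨univ.filter fun i => c i ≠ ((i : ℕ) + 1) * avec m w i, funext fun i => ?_⟩
    by_cases h : c i = ((i : ℕ) + 1) * avec m w i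
    · simp [ratio, h]
    · simpa [ratio, h] using (hc i).resolve_left h
  · rintro ⟨H, rfl⟩ i
    by_cases h : i ∈ H <;> simp [ratio, h]

/-- `0 < x 0` forces the profits to rank item `0` right above the big item and below all other
items of high profit. -/
theorem optimalKP.mid_eq_zero_or_one_of_pos (hw : ∀ i, 0 < w i) {H : Finset (Fin (m + 2))}
    {b : ℝ} {x : Fin (m + 2) → ℝ} (hb : b < Mval m w)
    (hx : optimalKP (avec m w) (fun i => ratio H i * avec m w i) b x) (hx₀ : 0 < x 0) :
    (∀ j, x (mid j) = 0 ∨ x (mid j) = 1) ∧ (x 0 = 1 ∨ x (Fin.last (m + 1)) = 0) := by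
  have hlt {i j} (h : ratio H j < ratio H i) := hx.eq_one_or_eq_zero_of_lt (avec_pos hw) h
  have hlast : x (Fin.last (m + 1)) < 1 := by
    have hmid : 0 ≤ ∑ j, (w j : ℝ) * x (mid j) :=
      sum_nonneg fun j _ => mul_nonneg (Int.cast_nonneg_iff.2 (hw j).le) (hx.1.2 _).1
    have hM := eps_pos.trans_le (eps_le_Mval fun i => (hw i).le)
    have := hx.1.1
    rw [sum_avec_mul] at this
    nlinarith [mul_nonneg eps_pos.le (hx.1.2 0).1]
  have h_last : Fin.last (m + 1) ∉ H := by
    intro h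
    refine hx₀.ne' ((hlt (i := Fin.last (m + 1)) (j := 0) ?_).resolve_left hlast.ne)
    unfold ratio; split_ifs <;> simp <;> linarith
  have h_zero : 0 ∈ H := by
    by_contra h
    refine hx₀.ne' ((hlt (i := Fin.last (m + 1)) (j := 0) ?_).resolve_left hlast.ne)
    simp [ratio, h, h_last]; linarith
  refine ⟨fun j => ?_, hlt (i := 0) (j := Fin.last (m + 1)) ?_⟩
  · by_cases hj : mid j ∈ H
    · refine .inr ((hlt (i := mid j) (j := 0) ?_).resolve_right hx₀.ne')
      simp [ratio, hj, h_zero]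
      positivity
    · refine .inl ((hlt (i := Fin.last (m + 1)) (j := mid j) ?_).resolve_left hlast.ne)
      simp [ratio, hj, h_last]
  · simp [ratio, h_zero, h_last]

theorem branch_le_sum_dvec_mul_of_optimalKP (hw : ∀ i, 0 < w i) {V₁ V₂ b : ℝ}
    (hV₁ : isSubsetSum m w V₁) (hV₂ : isSubsetSum m w V₂)
    (hcons : ∀ V : ℝ, isSubsetSum m w V → ¬ (V₁ < V ∧ V < V₂))
    (hb₁ : V₁ + eps ≤ b) (hb₂ : b < V₂ + eps) {c x : Fin (m + 2) → ℝ}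
    (hc : inU m w c) (hx : optimalKP (avec m w) c b x) :
    -Mval m w - V₁ + eps / Mval m w * (b - V₁ - eps) ≤ ∑ i, dvec m w i * x i ∨
      (V₂ ≤ b ∧ -(Mval m w / eps) * (b - V₂) - V₂ ≤ ∑ i, dvec m w i * x i) := by
  obtain ⟨H, rfl⟩ := inU_iff.1 hc
  have hw₀ : ∀ i, 0 ≤ w i := fun i => (hw i).le
  have hV₂M := hV₂.le_Mval_sub_eps hw₀
  have hεM := eps_le_Mval hw₀
  have htight := hx.sum_eq_of_lt_sum (avec_pos hw) (ratio_pos H)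
    (by rw [sum_avec]; linarith [eps_pos])
  rw [sum_dvec_mul, htight]
  obtain ⟨hs₀, hs₁⟩ := hx.1.2 0
  rcases hs₀.eq_or_lt with hs₀ | hs₀
  · have : -b ≤ -b + (Mval m w + eps) * x (Fin.last (m + 1)) - (Mval m w - eps) * x 0 := by
      rw [← hs₀]; nlinarith [(hx.1.2 (Fin.last (m + 1))).1, eps_pos]
    exact (branch_le_neg eps_pos hεM (hV₁.nonneg hw₀) (by linarith) hb₂).imp
      this.trans' (And.imp_right this.trans')
  obtain ⟨hmid, hst⟩ := optimalKP.mid_eq_zero_or_one_of_pos hw (by linarith) hx hs₀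
  set S := univ.filter fun j => x (mid j) = 1
  have hS : ∑ j, (w j : ℝ) * x (mid j) = ∑ j ∈ S, (w j : ℝ) := by
    rw [sum_filter]
    refine sum_congr rfl fun j _ => ?_
    rcases hmid j with h | h <;> simp [h]
  rw [sum_avec_mul, hS] at htight
  exact branch_le_of_budget_eq eps_pos hεM
    ((not_and_or.1 (hcons _ ⟨S, rfl⟩)).imp le_of_not_gt le_of_not_gt) hb₁ hb₂ htight hs₀ hs₁
    (hx.1.2 _).1 hst

theorem exists_inU_optimalKP (hw : ∀ i, 0 < w i) (S : Finset (Fin m)) {s t : ℝ}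
    (hs₀ : 0 ≤ s) (hs₁ : s ≤ 1) (ht₀ : 0 ≤ t) (ht₁ : t ≤ 1) (hst : s = 1 ∨ t = 0) :
    ∃ c x, inU m w c ∧
      optimalKP (avec m w) c (eps * s + ∑ j ∈ S, (w j : ℝ) + Mval m w * t) x ∧
      ∑ i, dvec m w i * x i = -(eps * s + ∑ j ∈ S, (w j : ℝ) + Mval m w * t)
        + (Mval m w + eps) * t - (Mval m w - eps) * s := by
  set x : Fin (m + 2) → ℝ := Fin.cons s (Fin.snoc (fun j => if j ∈ S then 1 else 0) t)
  have hx₀ : x 0 = s := by simp [x]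
  have hxl : x (Fin.last (m + 1)) = t := by simp only [x, ← Fin.succ_last]; simp
  have hxm (j : Fin m) : x (mid j) = if j ∈ S then 1 else 0 := by simp [x, mid]
  have htight : ∑ i, avec m w i * x i = eps * s + ∑ j ∈ S, (w j : ℝ) + Mval m w * t := by
    simp [sum_avec_mul, hx₀, hxl, hxm]
  have hfeas : feasibleKP (avec m w) (eps * s + ∑ j ∈ S, (w j : ℝ) + Mval m w * t) x := by
    refine ⟨htight.le, fun i => ?_⟩
    rcases eq_zero_or_eq_last_or_eq_mid i with rfl | rfl | ⟨j, rfl⟩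
    · exact ⟨hx₀ ▸ hs₀, hx₀ ▸ hs₁⟩
    · exact ⟨hxl ▸ ht₀, hxl ▸ ht₁⟩
    · rw [hxm]; split_ifs <;> norm_num
  set H : Finset (Fin (m + 2)) := insert 0 (S.image mid)
  have hr₀ : ratio H 0 = m + 3 := by simp [ratio, H]; ring
  have hrl : ratio H (Fin.last (m + 1)) = m + 2 := by
    simp [ratio, H]
    ring
  have hrm (j : Fin m) : ratio H (mid j) = if j ∈ S then (m : ℝ) + j + 4 else (j : ℝ) + 2 := by
    simp only [ratio, H, mem_insert, mid_ne_zero, mid_injective.mem_finset_image, false_or, val_mid]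
    split_ifs <;> push_cast <;> ring
  refine ⟨_, x, inU_iff.2 ⟨H, rfl⟩, ?_, by rw [sum_dvec_mul, htight, hx₀, hxl]⟩
  have hjm (j : Fin m) : 0 ≤ ((j : ℕ) : ℝ) ∧ ((j : ℕ) : ℝ) < m :=
    ⟨Nat.cast_nonneg _, Nat.cast_lt.2 j.isLt⟩
  obtain ⟨ρ, hρ, hle, hge⟩ : ∃ ρ : ℝ, 0 ≤ ρ ∧ (∀ i, x i < 1 → ratio H i ≤ ρ) ∧
      (∀ i, 0 < x i → ρ ≤ ratio H i) := by
    -- the threshold is the ratio of the possibly fractional item: the big one if `s = 1`,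
    -- item `0` if `t = 0`
    rcases hst with rfl | rfl <;>
      [refine ⟨m + 2, by positivity, fun i hi => ?_, fun i hi => ?_⟩;
       refine ⟨m + 3, by positivity, fun i hi => ?_, fun i hi => ?_⟩] <;>
      rcases eq_zero_or_eq_last_or_eq_mid i with rfl | rfl | ⟨j, rfl⟩ <;>
      simp only [hx₀, hxl, hxm, hr₀, hrl, hrm] at hi ⊢ <;>
      (try split_ifs at hi ⊢) <;> first | linarith | linarith [hjm j |>.1, hjm j |>.2]
  exact optimalKP.of_threshold (fun i => (avec_pos hw i).le) hρ hfeas htight hle hge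

theorem exists_optimalKP_eq_first_branch (hw : ∀ i, 0 < w i) {V b : ℝ} (hV : isSubsetSum m w V)
    (hb₁ : V + eps ≤ b) (hb₂ : b < V + eps + Mval m w) :
    ∃ c x, inU m w c ∧ optimalKP (avec m w) c b x ∧
      -Mval m w - V + eps / Mval m w * (b - V - eps) = ∑ i, dvec m w i * x i := by
  obtain ⟨S, rfl⟩ := hV
  have hM := eps_pos.trans_le (eps_le_Mval fun i => (hw i).le)
  obtain ⟨c, x, hc, hx, hval⟩ := exists_inU_optimalKP hw S (s := 1) zero_le_one le_rfl
    (t := (b - ∑ j ∈ S, (w j : ℝ) - eps) / Mval m w) (div_nonneg (by linarith) hM.le)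
    ((div_le_one hM).2 (by linarith)) (.inl rfl)
  have hb : eps * 1 + ∑ j ∈ S, (w j : ℝ) + Mval m w * ((b - ∑ j ∈ S, (w j : ℝ) - eps) / Mval m w)
      = b := by
    field_simp; ring
  rw [hb] at hx hval
  refine ⟨c, x, hc, hx, ?_⟩
  rw [hval]
  field_simp
  ring

theorem exists_optimalKP_eq_second_branch (hw : ∀ i, 0 < w i) {V b : ℝ}
    (hV : isSubsetSum m w V) (hb₁ : V ≤ b) (hb₂ : b < V + eps) :
    ∃ c x, inU m w c ∧ optimalKP (avec m w) c b x ∧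
      -(Mval m w / eps) * (b - V) - V = ∑ i, dvec m w i * x i := by
  obtain ⟨S, rfl⟩ := hV
  obtain ⟨c, x, hc, hx, hval⟩ := exists_inU_optimalKP hw S
    (s := (b - ∑ j ∈ S, (w j : ℝ)) / eps) (div_nonneg (by linarith) eps_pos.le)
    ((div_le_one eps_pos).2 (by linarith)) le_rfl zero_le_one (.inr rfl)
  have hb : eps * ((b - ∑ j ∈ S, (w j : ℝ)) / eps) + ∑ j ∈ S, (w j : ℝ) + Mval m w * 0 = b := by
    field_simp [eps_pos.ne']; ring
  rw [hb] at hx hval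
  refine ⟨c, x, hc, hx, ?_⟩
  rw [hval]
  field_simp [eps_pos.ne']
  ring

end DiscreteUncorrelated

open DiscreteUncorrelated in
theorem discrete_uncorrelated_shape_of_f_general
    (m : ℕ) (w : Fin m → ℤ) (hw : ∀ i, 1 ≤ w i)
    (V1 V2 : ℝ) (hV1 : isSubsetSum m w V1) (hV2 : isSubsetSum m w V2)
    (h12 : V1 < V2)
    (hcons : ∀ V : ℝ, isSubsetSum m w V → ¬ (V1 < V ∧ V < V2)) :
    (∀ b : ℝ, V1 + eps ≤ b → b < V2 →
      fval m w b = -Mval m w - V1 + eps / Mval m w * (b - V1 - eps)) ∧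
    (∀ b : ℝ, V2 ≤ b → b < V2 + eps →
      fval m w b = min (-Mval m w - V1 + eps / Mval m w * (b - V1 - eps))
        (-(Mval m w / eps) * (b - V2) - V2)) := by
  have hw' : ∀ i, 0 < w i := hw
  have hV1₀ := hV1.nonneg fun i => (hw' i).le
  have hV2M := hV2.le_Mval_sub_eps fun i => (hw' i).le
  have hgap := hV1.add_one_le hV2 h12
  obtain ⟨heps₀, heps₁⟩ : 0 < eps ∧ eps < 1 := by norm_num [eps]
  refine ⟨fun b hb₁ hb₂ => IsLeast.csInf_eq ⟨?_, ?_⟩, fun b hb₁ hb₂ => IsLeast.csInf_eq ⟨?_, ?_⟩⟩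
  · exact exists_optimalKP_eq_first_branch hw' hV1 hb₁ (by linarith)
  · rintro _ ⟨c, x, hc, hx, rfl⟩
    exact (branch_le_sum_dvec_mul_of_optimalKP hw' hV1 hV2 hcons hb₁ (by linarith) hc hx).resolve_right
      fun h => h.1.not_gt hb₂
  · rcases min_choice (-Mval m w - V1 + eps / Mval m w * (b - V1 - eps))
      (-(Mval m w / eps) * (b - V2) - V2) with h | h <;> rw [h]
    exacts [exists_optimalKP_eq_first_branch hw' hV1 (by linarith) (by linarith),
      exists_optimalKP_eq_second_branch hw' hV2 hb₁ hb₂]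
  · rintro _ ⟨c, x, hc, hx, rfl⟩
    rcases branch_le_sum_dvec_mul_of_optimalKP hw' hV1 hV2 hcons (by linarith) hb₂ hc hx with h | ⟨-, h⟩
    exacts [min_le_of_left_le h, min_le_of_right_le h]

/-- Shape of the leader's objective function `f` of the discrete uncorrelated
reduction instance between two consecutive subset sums `V₁ < V₂`. -/
theorem discrete_uncorrelated_shape_of_f
    (m : ℕ) (w : Fin m → ℤ) (W : ℤ) (hw : ∀ i, 1 ≤ w i)
    (hW1 : 1 ≤ W) (hW2 : W ≤ (∑ i, w i) - 1)
    (V1 V2 : ℝ) (hV1 : isSubsetSum m w V1) (hV2 : isSubsetSum m w V2)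
    (h12 : V1 < V2)
    (hcons : ∀ V : ℝ, isSubsetSum m w V → ¬ (V1 < V ∧ V < V2)) :
    (∀ b : ℝ, V1 + eps ≤ b → b < V2 →
      fval m w b = -Mval m w - V1 + eps / Mval m w * (b - V1 - eps)) ∧
    (∀ b : ℝ, V2 ≤ b → b < V2 + eps →
      fval m w b = min (-Mval m w - V1 + eps / Mval m w * (b - V1 - eps))
        (-(Mval m w / eps) * (b - V2) - V2)) :=
  discrete_uncorrelated_shape_of_f_general m w hw V1 V2 hV1 hV2 h12 hcons

end
end

section
/- Let m ∈ ℕ, w ∈ ℤ^m with w_i ≥ 1 for all i, W ∈ ℤ with 1 ≤ W ≤ Σ_{i=1}^m w_i − 1, and M := Σ_{i=1}^m w_i + 1. Let ĉ := ((2M−1)w_1, …, (2M−1)w_m, 2M²) ∈ ℝ^{m+1} and U := { c ∈ ℝ^{m+1} : c_i ≥ ĉ_i for all i, Σ_{i=1}^{m+1}(c_i − ĉ_i) ≤ W }. For c ∈ U define I_c := { i ∈ {1,…,m} : c_i/w_i ≥ c_{m+1}/M } and V_c := Σ_{i∈I_c} w_i. Then max_{c ∈ U} V_c exists and equals max{ Σ_{i∈S}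 w_i : S ⊆ {1,…,m}, Σ_{i∈S} w_i ≤ W }, the largest subset sum of {w_1,…,w_m} not exceeding W. -/
/-!
If item `i` is packed before the last one, then `c_i / w_i ≥ c_{m+1} / M ≥ 2M`, so the adversary
raised `c_i` by at least `w_i` above `(2M - 1) w_i`; hence `V_c` is a subset sum within the
budget `W`. Conversely, raising `c_i` by exactly `w_i` for `i ∈ S` and leaving everything else
nominal makes the follower pack exactly `S` first. So the values `V_c` are exactly the subset sums
not exceeding `W`, a finite nonempty set.
-/

open Finset

section

variable {ι : Type*} [Fintype ι]

theorem exists_isGreatest_subset_sums (w : ι → ℝ) {B : ℝ} (hB : 0 ≤ B) :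
    ∃ V, IsGreatest {V : ℝ | ∃ S : Finset ι, V = ∑ i ∈ S, w i ∧ V ≤ B} V := by
  set s := {V : ℝ | ∃ S : Finset ι, V = ∑ i ∈ S, w i ∧ V ≤ B}
  have hfin : s.Finite :=
    (Set.finite_range fun S : Finset ι => ∑ i ∈ S, w i).subset
      fun _ ⟨S, hS, _⟩ => ⟨S, hS.symm⟩
  have hne : s.Nonempty := ⟨0, ∅, by simp, hB⟩
  exact ⟨sSup s, hne.csSup_mem hfin, fun _ hV => le_csSup hfin.bddAbove hV⟩

/-- The set `I_c`, with `x i = c_i` and `y = c_{m+1}`. -/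
noncomputable def packedBefore (w : ι → ℝ) (M : ℝ) (x : ι → ℝ) (y : ℝ) : Finset ι :=
  univ.filter fun i => y / M ≤ x i / w i

variable {w : ι → ℝ} {M : ℝ}

theorem le_sub_of_div_le_div_of_two_mul_sq_le {w x y : ℝ} (hM : 0 < M) (hw : 0 < w)
    (hy : 2 * M ^ 2 ≤ y) (h : y / M ≤ x / w) : w ≤ x - (2 * M - 1) * w := by
  have hyM : 2 * M ≤ y / M := by rw [le_div_iff₀ hM]; nlinarith
  have hx : 2 * M * w ≤ x := (le_div_iff₀ hw).1 (hyM.trans h)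
  linarith

theorem two_mul_sq_div_le_iff {w e : ℝ} (hM : 0 < M) (hw : 0 < w) :
    2 * M ^ 2 / M ≤ ((2 * M - 1) * w + e) / w ↔ w ≤ e := by
  rw [div_le_div_iff₀ hM hw]
  constructor <;> intro h <;> nlinarith

theorem sum_packedBefore_le (hw : ∀ i, 0 < w i) (hM : 0 < M) {x : ι → ℝ} {y B : ℝ}
    (hx : ∀ i, (2 * M - 1) * w i ≤ x i) (hy : 2 * M ^ 2 ≤ y)
    (hB : ∑ i, (x i - (2 * M - 1) * w i) ≤ B) :
    ∑ i ∈ packedBefore w M x y, w i ≤ B :=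
  calc ∑ i ∈ packedBefore w M x y, w i
      ≤ ∑ i ∈ packedBefore w M x y, (x i - (2 * M - 1) * w i) :=
        sum_le_sum fun i hi =>
          le_sub_of_div_le_div_of_two_mul_sq_le hM (hw i) hy (mem_filter.1 hi).2
    _ ≤ ∑ i, (x i - (2 * M - 1) * w i) :=
        sum_le_sum_of_subset_of_nonneg (subset_univ _) fun i _ _ => sub_nonneg.2 (hx i)
    _ ≤ B := hB

theorem packedBefore_add_indicator [DecidableEq ι] (hw : ∀ i, 0 < w i) (hM : 0 < M)
    (S : Finset ι) :
    packedBefore w M (fun i => (2 * M - 1) * w i + if i ∈ S then w i else 0) (2 * M ^ 2) = S := by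
  ext i
  simp only [packedBefore, mem_filter, mem_univ, true_and, two_mul_sq_div_le_iff hM (hw i)]
  split_ifs with hi
  · simpa using hi
  · simpa [hi] using (hw i).not_ge

end

theorem simplicial_reduction_max_Vc_general
    (m : ℕ) (w : Fin m → ℤ) (W : ℤ) (hw : ∀ i, 1 ≤ w i)
    (hW1 : 1 ≤ W) :
    let M : ℝ := (∑ i, (w i : ℝ)) + 1
    let chat : Fin (m + 1) → ℝ := fun i =>
      if h : (i : ℕ) < m then (2 * M - 1) * (w ⟨i, h⟩ : ℝ) else 2 * M ^ 2
    let U : Set (Fin (m + 1) → ℝ) :=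
      {c | (∀ i, chat i ≤ c i) ∧ (∑ i, (c i - chat i)) ≤ (W : ℝ)}
    let Vc : (Fin (m + 1) → ℝ) → ℝ := fun c =>
      ∑ i : Fin m,
        if c (Fin.last m) / M ≤ c i.castSucc / (w i : ℝ) then (w i : ℝ) else 0
    ∃ Vmax : ℝ,
      IsGreatest {V : ℝ | ∃ S : Finset (Fin m),
        V = ∑ i ∈ S, (w i : ℝ) ∧ V ≤ (W : ℝ)} Vmax ∧
      IsGreatest {v : ℝ | ∃ c ∈ U, v = Vc c} Vmax := by
  intro M chat U Vc
  have hw₀ : ∀ i, (0 : ℝ) < w i := fun i => Int.cast_pos.2 (hw i)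
  have hM : 0 < M := add_pos_of_nonneg_of_pos (sum_nonneg fun i _ => (hw₀ i).le) one_pos
  have hchat : chat = Fin.snoc (fun i => (2 * M - 1) * w i) (2 * M ^ 2) := by
    ext j
    induction j using Fin.lastCases <;> simp [chat]
  have hU : ∀ x y, Fin.snoc x y ∈ U ↔ ((∀ i, (2 * M - 1) * w i ≤ x i) ∧ 2 * M ^ 2 ≤ y) ∧
      ∑ i, (x i - (2 * M - 1) * w i) + (y - 2 * M ^ 2) ≤ W := by
    intro x y
    simp only [U, hchat, Set.mem_ofPred_eq, Fin.forall_fin_succ', Fin.sum_univ_castSucc,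
      Fin.snoc_castSucc, Fin.snoc_last]
  have hVc : ∀ x y,
      Vc (Fin.snoc x y) = ∑ i ∈ packedBefore (fun i => (w i : ℝ)) M x y, (w i : ℝ) := by
    simp [Vc, packedBefore, sum_filter]
  have hsets : {v | ∃ c ∈ U, v = Vc c} =
      {V : ℝ | ∃ S : Finset (Fin m), V = ∑ i ∈ S, (w i : ℝ) ∧ V ≤ W} := by
    ext v
    constructor
    · rintro ⟨c, hc, rfl⟩
      rw [← Fin.snoc_init_self c, hU] at hc
      rw [← Fin.snoc_init_self c, hVc]
      exact ⟨_, rfl, sum_packedBefore_le hw₀ hM hc.1.1 hc.1.2 (by linarith [hc.1.2, hc.2])⟩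
    · rintro ⟨S, rfl, hS⟩
      refine ⟨Fin.snoc (fun i => (2 * M - 1) * w i + if i ∈ S then (w i : ℝ) else 0) (2 * M ^ 2),
        (hU _ _).2 ⟨⟨fun i => ?_, le_rfl⟩, ?_⟩, by rw [hVc, packedBefore_add_indicator hw₀ hM]⟩
      · split_ifs <;> linarith [hw₀ i]
      · simpa [sum_ite_mem] using hS
  obtain ⟨Vmax, hVmax⟩ := exists_isGreatest_subset_sums (fun i => (w i : ℝ)) (B := W)
    (by exact_mod_cast (by omega : 0 ≤ W))
  exact ⟨Vmax, hVmax, hsets ▸ hVmax⟩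

/-- Key claim of the simplicial-uncertainty reduction: with
`ĉ = ((2M−1)w₁, …, (2M−1)w_m, 2M²)` and
`U = { c : c ≥ ĉ, ∑ᵢ (cᵢ − ĉᵢ) ≤ W }`, the maximum of
`V_c = ∑_{i : cᵢ/wᵢ ≥ c_{m+1}/M} wᵢ` over `c ∈ U` exists and equals the
largest subset sum of `{w₁, …, w_m}` not exceeding `W`. -/
theorem simplicial_reduction_max_Vc
    (m : ℕ) (w : Fin m → ℤ) (W : ℤ) (hw : ∀ i, 1 ≤ w i)
    (hW1 : 1 ≤ W) (hW2 : W ≤ (∑ i, w i) - 1) :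
    let M : ℝ := (∑ i, (w i : ℝ)) + 1
    let chat : Fin (m + 1) → ℝ := fun i =>
      if h : (i : ℕ) < m then (2 * M - 1) * (w ⟨i, h⟩ : ℝ) else 2 * M ^ 2
    let U : Set (Fin (m + 1) → ℝ) :=
      {c | (∀ i, chat i ≤ c i) ∧ (∑ i, (c i - chat i)) ≤ (W : ℝ)}
    let Vc : (Fin (m + 1) → ℝ) → ℝ := fun c =>
      ∑ i : Fin m,
        if c (Fin.last m) / M ≤ c i.castSucc / (w i : ℝ) then (w i : ℝ) else 0
    ∃ Vmax : ℝ,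
      IsGreatest {V : ℝ | ∃ S : Finset (Fin m),
        V = ∑ i ∈ S, (w i : ℝ) ∧ V ≤ (W : ℝ)} Vmax ∧
      IsGreatest {v : ℝ | ∃ c ∈ U, v = Vc c} Vmax :=
  simplicial_reduction_max_Vc_general m w W hw hW1
end

section
/- Let m ∈ ℕ, a ∈ ℤ^m with a_i ≥ 1 for all i, and τ ∈ ℝ. For M ⊆ {1,…,m} let s_M := Σ_{i∈M} a_i and define f_{M,τ} : ℝ → ℝ by f_{M,τ}(b) := (1+τ)·min(b, s_M) + (τ−1)·max(b − s_M, 0), and set f_τ(b) := 2^{−m} Σ_{M ⊆ {1,…,m}} f_{M,τ}(b). Then for every integer b with 0 ≤ b < Σ_{i=1}^m a_i, f_τ(b+1) − f_τ(b) = 1 + τ − 2^{1−m} · #{ x ∈ {0,1}^m : a^T x ≤ b }. -/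
/-!
Each `f_{M,τ}` is piecewise linear with its only kink at the integer `s_M`, so on the unit
interval `[b, b+1]` with `b` an integer it is linear, of slope `τ - 1` if `s_M ≤ b` and `1 + τ`
otherwise. Averaging over all `2^m` subsets, the slope of `f_τ` there is
`1 + τ - 2 · 2^{-m} · #{M : s_M ≤ b}`.
-/

open Finset

def kinkedLinear (p q s x : ℝ) : ℝ :=
  p * min x s + q * max (x - s) 0

theorem kinkedLinear_sub_of_kink_le {p q s x y : ℝ} (hs : s ≤ x) (hxy : x ≤ y) :
    kinkedLinear p q s y - kinkedLinear p q s x = q * (y - x) := by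
  simp only [kinkedLinear, min_eq_right (hs.trans hxy), min_eq_right hs,
    max_eq_left (sub_nonneg.2 (hs.trans hxy)), max_eq_left (sub_nonneg.2 hs)]
  ring

theorem kinkedLinear_sub_of_le_kink {p q s x y : ℝ} (hxy : x ≤ y) (hs : y ≤ s) :
    kinkedLinear p q s y - kinkedLinear p q s x = p * (y - x) := by
  simp only [kinkedLinear, min_eq_left hs, min_eq_left (hxy.trans hs),
    max_eq_right (sub_nonpos.2 hs), max_eq_right (sub_nonpos.2 (hxy.trans hs))]
  ring

theorem kinkedLinear_intCast_add_one_sub (p q : ℝ) (s b : ℤ) :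
    kinkedLinear p q s ((b : ℝ) + 1) - kinkedLinear p q s b = if s ≤ b then q else p := by
  split_ifs with h
  · rw [kinkedLinear_sub_of_kink_le (by exact_mod_cast h) (by linarith)]
    ring
  · have hb : b + 1 ≤ s := Int.add_one_le_iff.2 (not_le.1 h)
    rw [kinkedLinear_sub_of_le_kink (by linarith) (by exact_mod_cast hb)]
    ring

theorem Finset.sum_ite_const {α R : Type*} [CommRing R] (s : Finset α) (P : α → Prop)
    [DecidablePred P] (p q : R) :
    ∑ x ∈ s, (if P x then q else p) = #s * p + #(s.filter P) * (q - p) := by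
  have h : ∀ x, (if P x then q else p) = p + if P x then q - p else 0 := fun x => by
    split_ifs <;> ring
  simp only [h, sum_add_distrib, ← sum_filter, sum_const, nsmul_eq_mul]

theorem stochastic_slope_counts_knapsack_solutions_general
    (m : ℕ) (a : Fin m → ℤ) (τ : ℝ) :
    let s : Finset (Fin m) → ℝ := fun M => ∑ i ∈ M, (a i : ℝ)
    let f : Finset (Fin m) → ℝ → ℝ := fun M b =>
      (1 + τ) * min b (s M) + (τ - 1) * max (b - s M) 0
    let F : ℝ → ℝ := fun b => (∑ M : Finset (Fin m), f M b) / 2 ^ m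
    ∀ b : ℤ, 0 ≤ b → b < ∑ i, a i →
      F ((b : ℝ) + 1) - F (b : ℝ) =
        1 + τ - (2 : ℝ) ^ (1 - (m : ℤ)) *
          ((Finset.univ.filter
            fun S : Finset (Fin m) => (∑ i ∈ S, a i) ≤ b).card : ℝ) := by
  intro s f F b _ _
  have hf : ∀ M x, f M x = kinkedLinear (1 + τ) (τ - 1) (∑ i ∈ M, a i : ℤ) x := by
    intro M x
    simp only [f, s, kinkedLinear, Int.cast_sum]
  have hslope : F ((b : ℝ) + 1) - F b =
      (∑ M : Finset (Fin m), if ∑ i ∈ M, a i ≤ b then τ - 1 else 1 + τ) / 2 ^ m := by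
    simp only [F, ← sub_div, ← sum_sub_distrib, hf, kinkedLinear_intCast_add_one_sub]
  rw [hslope, sum_ite_const, card_univ, Fintype.card_finset, Fintype.card_fin,
    zpow_sub₀ two_ne_zero, zpow_one, zpow_natCast]
  field_simp
  push_cast
  ring

/-- Slope formula in the #Knapsack reduction: with
`f_{M,τ}(b) = (1+τ)·min(b, s_M) + (τ−1)·max(b − s_M, 0)` and
`f_τ = 2^{−m} ∑_M f_{M,τ}`, for every integer `0 ≤ b < ∑ aᵢ` one has
`f_τ(b+1) − f_τ(b) = 1 + τ − 2^{1−m} · #{x ∈ {0,1}^m : aᵀx ≤ b}`. -/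
theorem stochastic_slope_counts_knapsack_solutions
    (m : ℕ) (a : Fin m → ℤ) (ha : ∀ i, 1 ≤ a i) (τ : ℝ) :
    let s : Finset (Fin m) → ℝ := fun M => ∑ i ∈ M, (a i : ℝ)
    let f : Finset (Fin m) → ℝ → ℝ := fun M b =>
      (1 + τ) * min b (s M) + (τ - 1) * max (b - s M) 0
    let F : ℝ → ℝ := fun b => (∑ M : Finset (Fin m), f M b) / 2 ^ m
    ∀ b : ℤ, 0 ≤ b → b < ∑ i, a i →
      F ((b : ℝ) + 1) - F (b : ℝ) =
        1 + τ - (2 : ℝ) ^ (1 - (m : ℤ)) *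
          ((Finset.univ.filter
            fun S : Finset (Fin m) => (∑ i ∈ S, a i) ≤ b).card : ℝ) :=
  stochastic_slope_counts_knapsack_solutions_general m a τ
end
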